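/- arXiv:quant-ph/0702189 — 4 statements merged into one kernel-verified Lean document; each statement's English description precedes it below -/
import Mathlib

section
/- Let T be a real M×M matrix and let x_1,...,x_M, y_1,...,y_M be vectors in the unit ball of a real Hilbert space H. Then |∑_{i,j} T_{ij} ⟨x_i, y_j⟩| ≤ K_G · sup over signs ε_i, ν_j ∈ {−1,1} of |∑_{i,j} T_{ij} ε_i ν_j|, where K_G is Grothendieck's constant. -/
open scoped BigOperators

/-- The classical (LHV) value of a bipartite correlation Bell inequality `T`:
the supremum over deterministic sign assignments. -/
noncomputable def signSup {M : ℕ} (T : Matrix (Fin M) (Fin M) ℝ) : ℝ :=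
  ⨆ ε : Fin M → ({-1, 1} : Set ℝ), ⨆ ν : Fin M → ({-1, 1} : Set ℝ),
    |∑ i, ∑ j, T i j * (ε i : ℝ) * (ν j : ℝ)|

/-- The (real) Grothendieck constant: the smallest universal constant `K` such that
for all dimensions and all real matrices `T`, Grothendieck's inequality holds. -/
noncomputable def realGrothendieckConstant : ℝ :=
  sInf {K : ℝ | 0 ≤ K ∧ ∀ (n M : ℕ) (T : Matrix (Fin M) (Fin M) ℝ)
    (x y : Fin M → EuclideanSpace ℝ (Fin n)),
    (∀ i, ‖x i‖ ≤ 1) → (∀ j, ‖y j‖ ≤ 1) →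
    |∑ i, ∑ j, T i j * (inner ℝ (x i) (y j) : ℝ)| ≤ K * signSup T}

/-!
Fix the size `M` and let `K` be the best constant for `M × M` matrices; it is finite since
`|T i j| ≤ signSup T`. Averaging over random signs `ω`, the Rademacher sums
`X = ∑ₖ ωₖ xₖ` and `Y = ∑ₖ ωₖ yₖ` satisfy `⟪x, y⟫ = 𝔼 X Y`, so `x ↦ X` embeds ℝⁿ isometrically
into `L²`. Clip `X` and `Y` at height `R` to `P` and `Q` and split
`X Y = P Q + (X - P) Y + P (Y - Q)`. As `|P|, |Q| ≤ R` and a bilinear form on a box is extremal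
at its vertices, the first term contributes at most `R² signSup T`. By Khintchine's bound
`𝔼 X⁴ ≤ 3 ‖x‖⁴` the tails have `L²` norm at most `√3 / R`, so the inequality for `K` bounds each
of the other two terms by `K √3 / R · signSup T`. With `R² = 48` this gives `K ≤ 48 + K / 2`,
hence `K ≤ 96` for every `M`. A general Hilbert space reduces to `EuclideanSpace ℝ (Fin n)`
through the span of the finitely many vectors.
-/

open Finset
open scoped InnerProductSpace

namespace Grothendieck

section Signs

variable {M : ℕ}

theorem abs_sum_mul_sign_le_signSup (T : Matrix (Fin M) (Fin M) ℝ)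
    (ε ν : Fin M → ({-1, 1} : Set ℝ)) :
    |∑ i, ∑ j, T i j * (ε i : ℝ) * (ν j : ℝ)| ≤ signSup T := by
  unfold signSup
  refine le_ciSup_of_le (Set.finite_range _).bddAbove ε ?_
  exact le_ciSup (f := fun ν => |∑ i, ∑ j, T i j * (ε i : ℝ) * (ν j : ℝ)|)
    (Set.finite_range _).bddAbove ν

theorem signSup_nonneg (T : Matrix (Fin M) (Fin M) ℝ) : 0 ≤ signSup T :=
  (abs_nonneg _).trans
    (abs_sum_mul_sign_le_signSup T (fun _ => ⟨1, by simp⟩) (fun _ => ⟨1, by simp⟩))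

theorem exists_sign_forall_sum_mul_le {ι : Type*} [Fintype ι] (c : ι → ℝ) :
    ∃ ε : ι → ({-1, 1} : Set ℝ), ∀ a : ι → ℝ, (∀ i, |a i| ≤ 1) →
      ∑ i, a i * c i ≤ ∑ i, (ε i : ℝ) * c i := by
  classical
  refine ⟨fun i => if 0 ≤ c i then ⟨1, by simp⟩ else ⟨-1, by simp⟩, fun a ha => ?_⟩
  refine sum_le_sum fun i _ => ?_
  have := abs_le.1 (ha i)
  by_cases h : 0 ≤ c i <;> simp only [h, if_true, if_false] <;> nlinarith

theorem sum_mul_le_signSup (T : Matrix (Fin M) (Fin M) ℝ) {a b : Fin M → ℝ}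
    (ha : ∀ i, |a i| ≤ 1) (hb : ∀ j, |b j| ≤ 1) :
    ∑ i, ∑ j, T i j * a i * b j ≤ signSup T := by
  obtain ⟨ε, hε⟩ := exists_sign_forall_sum_mul_le fun i => ∑ j, T i j * b j
  obtain ⟨ν, hν⟩ := exists_sign_forall_sum_mul_le fun j => ∑ i, T i j * ε i
  calc ∑ i, ∑ j, T i j * a i * b j = ∑ i, a i * ∑ j, T i j * b j := by
        simp_rw [mul_sum]; exact sum_congr rfl fun _ _ => sum_congr rfl fun _ _ => by ring
    _ ≤ ∑ i, (ε i : ℝ) * ∑ j, T i j * b j := hε a ha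
    _ = ∑ j, b j * ∑ i, T i j * ε i := by
        simp_rw [mul_sum]; rw [sum_comm]
        exact sum_congr rfl fun _ _ => sum_congr rfl fun _ _ => by ring
    _ ≤ ∑ j, (ν j : ℝ) * ∑ i, T i j * ε i := hν b hb
    _ = ∑ i, ∑ j, T i j * ε i * ν j := by
        simp_rw [mul_sum]; rw [sum_comm]
        exact sum_congr rfl fun _ _ => sum_congr rfl fun _ _ => by ring
    _ ≤ signSup T := (le_abs_self _).trans (abs_sum_mul_sign_le_signSup T ε ν)

theorem abs_sum_mul_le_signSup (T : Matrix (Fin M) (Fin M) ℝ) {a b : Fin M → ℝ}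
    (ha : ∀ i, |a i| ≤ 1) (hb : ∀ j, |b j| ≤ 1) :
    |∑ i, ∑ j, T i j * a i * b j| ≤ signSup T := by
  refine abs_le'.2 ⟨sum_mul_le_signSup T ha hb, ?_⟩
  have := sum_mul_le_signSup T (a := -a) (fun i => by simpa using ha i) hb
  simpa [← sum_neg_distrib] using this

theorem abs_sum_mul_le_mul_signSup (T : Matrix (Fin M) (Fin M) ℝ) {a b : Fin M → ℝ}
    {C D : ℝ} (hC : 0 < C) (hD : 0 < D) (ha : ∀ i, |a i| ≤ C) (hb : ∀ j, |b j| ≤ D) :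
    |∑ i, ∑ j, T i j * a i * b j| ≤ C * D * signSup T := by
  have h := abs_sum_mul_le_signSup T (a := fun i => a i / C) (b := fun j => b j / D)
    (fun i => by rw [abs_div, abs_of_pos hC]; exact div_le_one_of_le₀ (ha i) hC.le)
    (fun j => by rw [abs_div, abs_of_pos hD]; exact div_le_one_of_le₀ (hb j) hD.le)
  have hscale : ∑ i, ∑ j, T i j * (a i / C) * (b j / D) =
      (∑ i, ∑ j, T i j * a i * b j) / (C * D) := by
    simp_rw [sum_div]; congr! 2; field_simp
  rwa [hscale, abs_div, abs_of_pos (mul_pos hC hD), div_le_iff₀ (mul_pos hC hD),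
    mul_comm] at h

theorem abs_apply_le_signSup (T : Matrix (Fin M) (Fin M) ℝ) (i j : Fin M) :
    |T i j| ≤ signSup T := by
  classical
  have h := abs_sum_mul_le_signSup T (a := Pi.single i 1) (b := Pi.single j 1)
    (fun k => by by_cases hk : k = i <;> simp [hk]) (fun k => by by_cases hk : k = j <;> simp [hk])
  simpa [Pi.single_apply] using h

end Signs

theorem exists_euclidean_inner_eq {E : Type*} [NormedAddCommGroup E] [InnerProductSpace ℝ E]
    {ι : Type*} [Finite ι] (v : ι → E) :
    ∃ (n : ℕ) (w : ι → EuclideanSpace ℝ (Fin n)),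
      (∀ a, ‖w a‖ = ‖v a‖) ∧ ∀ a b, ⟪w a, w b⟫_ℝ = ⟪v a, v b⟫_ℝ := by
  let F := Submodule.span ℝ (Set.range v)
  have : FiniteDimensional ℝ F := FiniteDimensional.span_of_finite ℝ (Set.finite_range v)
  let L := (stdOrthonormalBasis ℝ F).repr
  have hmem : ∀ a, v a ∈ F := fun a => Submodule.subset_span ⟨a, rfl⟩
  exact ⟨_, fun a => L ⟨v a, hmem a⟩, fun a => by simp, fun a b => by simp⟩

def GrothendieckBound (M : ℕ) (K : ℝ) : Prop :=
  ∀ (n : ℕ) (T : Matrix (Fin M) (Fin M) ℝ) (x y : Fin M → EuclideanSpace ℝ (Fin n)),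
    (∀ i, ‖x i‖ ≤ 1) → (∀ j, ‖y j‖ ≤ 1) →
    |∑ i, ∑ j, T i j * ⟪x i, y j⟫_ℝ| ≤ K * signSup T

namespace GrothendieckBound

variable {M : ℕ} {K : ℝ}

theorem mono (h : GrothendieckBound M K) {K' : ℝ} (hK : K ≤ K') : GrothendieckBound M K' :=
  fun n T x y hx hy =>
    (h n T x y hx hy).trans (mul_le_mul_of_nonneg_right hK (signSup_nonneg T))

variable {E : Type*} [NormedAddCommGroup E] [InnerProductSpace ℝ E]

theorem abs_sum_inner_le (h : GrothendieckBound M K) (T : Matrix (Fin M) (Fin M) ℝ)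
    {x y : Fin M → E} (hx : ∀ i, ‖x i‖ ≤ 1) (hy : ∀ j, ‖y j‖ ≤ 1) :
    |∑ i, ∑ j, T i j * ⟪x i, y j⟫_ℝ| ≤ K * signSup T := by
  obtain ⟨n, w, hnorm, hinner⟩ := exists_euclidean_inner_eq (Sum.elim x y)
  simpa only [Function.comp_apply, hinner, Sum.elim_inl, Sum.elim_inr] using
    h n T (w ∘ Sum.inl) (w ∘ Sum.inr) (fun i => (hnorm _).trans_le (hx i))
      (fun j => (hnorm _).trans_le (hy j))

theorem abs_sum_inner_le_of_norm_le (h : GrothendieckBound M K)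
    (T : Matrix (Fin M) (Fin M) ℝ) {x y : Fin M → E} {a b : ℝ} (ha : 0 < a) (hb : 0 < b)
    (hx : ∀ i, ‖x i‖ ≤ a) (hy : ∀ j, ‖y j‖ ≤ b) :
    |∑ i, ∑ j, T i j * ⟪x i, y j⟫_ℝ| ≤ K * a * b * signSup T := by
  have hnorm {c : ℝ} (hc : 0 < c) {z : E} (hz : ‖z‖ ≤ c) : ‖c⁻¹ • z‖ ≤ 1 := by
    rw [norm_smul, norm_inv, Real.norm_of_nonneg hc.le]
    exact inv_mul_le_one_of_le₀ hz hc.le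
  have h' := h.abs_sum_inner_le T (x := fun i => a⁻¹ • x i) (y := fun j => b⁻¹ • y j)
    (fun i => hnorm ha (hx i)) (fun j => hnorm hb (hy j))
  have hscale : ∑ i, ∑ j, T i j * ⟪a⁻¹ • x i, b⁻¹ • y j⟫_ℝ =
      (a * b)⁻¹ * ∑ i, ∑ j, T i j * ⟪x i, y j⟫_ℝ := by
    simp_rw [real_inner_smul_left, real_inner_smul_right, mul_sum]
    exact sum_congr rfl fun _ _ => sum_congr rfl fun _ _ => by ring
  rwa [hscale, abs_mul, abs_of_pos (inv_pos.2 (mul_pos ha hb)), inv_mul_le_iff₀ (mul_pos ha hb),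
    ← mul_assoc, mul_comm _ K, ← mul_assoc] at h'

end GrothendieckBound

theorem grothendieckBound_sq (M : ℕ) : GrothendieckBound M (M ^ 2) := by
  intro n T x y hx hy
  have hterm (i j : Fin M) : |T i j * ⟪x i, y j⟫_ℝ| ≤ signSup T := by
    rw [abs_mul]
    calc |T i j| * |⟪x i, y j⟫_ℝ| ≤ signSup T * (‖x i‖ * ‖y j‖) :=
          mul_le_mul (abs_apply_le_signSup T i j) (abs_real_inner_le_norm _ _) (abs_nonneg _)
            (signSup_nonneg T)
      _ ≤ signSup T := mul_le_of_le_one_right (signSup_nonneg T)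
          (mul_le_one₀ (hx i) (norm_nonneg _) (hy j))
  calc |∑ i, ∑ j, T i j * ⟪x i, y j⟫_ℝ| ≤ ∑ i, ∑ j, |T i j * ⟪x i, y j⟫_ℝ| :=
        (abs_sum_le_sum_abs _ _).trans (sum_le_sum fun i _ => abs_sum_le_sum_abs _ _)
    _ ≤ ∑ _i : Fin M, ∑ _j : Fin M, signSup T :=
        sum_le_sum fun i _ => sum_le_sum fun j _ => hterm i j
    _ = M ^ 2 * signSup T := by simp [sq, mul_assoc]

section Rademacher

variable {n : ℕ}

def rademacher (b : Bool) : ℝ := if b then 1 else -1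

def rademacherSum (v : Fin n → ℝ) (ω : Fin n → Bool) : ℝ := ∑ k, rademacher (ω k) * v k

theorem rademacher_mul_self (b : Bool) : rademacher b * rademacher b = 1 := by
  cases b <;> norm_num [rademacher]

theorem expect_rademacher_mul_rademacher (k l : Fin n) :
    𝔼 ω : Fin n → Bool, rademacher (ω k) * rademacher (ω l) = if k = l then 1 else 0 := by
  split_ifs with hkl
  · simp [hkl, rademacher_mul_self]
  -- flipping the `l`-th sign is a bijection that negates the integrand
  let flip : Equiv.Perm (Fin n → Bool) :=
    Function.Involutive.toPerm (fun ω => Function.update ω l (!ω l)) fun ω => by simp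
  have hflip : ∀ ω, rademacher (ω k) * rademacher (ω l) =
      -(rademacher (flip ω k) * rademacher (flip ω l)) := fun ω => by
    have hk : flip ω k = ω k := Function.update_of_ne hkl _ _
    have hl : flip ω l = !ω l := Function.update_self _ _ _
    rw [hk, hl]
    cases ω l <;> simp [rademacher]
  have := Fintype.expect_equiv flip _ (fun ω => -(rademacher (ω k) * rademacher (ω l))) hflip
  rw [expect_neg_distrib] at this
  linarith

theorem expect_rademacherSum_mul (u v : Fin n → ℝ) :
    𝔼 ω, rademacherSum u ω * rademacherSum v ω = ∑ k, u k * v k := by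
  calc 𝔼 ω, rademacherSum u ω * rademacherSum v ω
      = ∑ k, ∑ l, u k * v l * 𝔼 ω : Fin n → Bool, rademacher (ω k) * rademacher (ω l) := by
        simp_rw [rademacherSum, sum_mul_sum, expect_sum_comm, mul_expect]
        exact sum_congr rfl fun _ _ => sum_congr rfl fun _ _ => expect_congr rfl fun _ _ => by ring
    _ = ∑ k, u k * v k := by simp [expect_rademacher_mul_rademacher]

theorem expect_fin_succ {α β : Type*} [Fintype α] [AddCommMonoid β] [Module ℚ≥0 β]
    (f : (Fin (n + 1) → α) → β) :
    𝔼 ω, f ω = 𝔼 a, 𝔼 ω, f (Fin.cons a ω) := by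
  rw [← expect_product' univ univ fun a ω => f (Fin.cons a ω), univ_product_univ]
  exact Fintype.expect_equiv (Fin.consEquiv _).symm _ _ fun ω => by simp [Fin.consEquiv]

theorem expect_bool {K : Type*} [Semifield K] [CharZero K] (f : Bool → K) :
    𝔼 b, f b = (f true + f false) / 2 := by
  rw [Fintype.expect_eq_sum_div_card, Fintype.sum_bool, Fintype.card_bool]
  norm_num

theorem rademacherSum_cons (v : Fin (n + 1) → ℝ) (b : Bool) (ω : Fin n → Bool) :
    rademacherSum v (Fin.cons b ω) = rademacher b * v 0 + rademacherSum (Fin.tail v) ω := by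
  simp [rademacherSum, Fin.sum_univ_succ, Fin.tail]

theorem expect_rademacherSum_pow_four_le (v : Fin n → ℝ) :
    𝔼 ω, rademacherSum v ω ^ 4 ≤ 3 * (∑ k, v k ^ 2) ^ 2 := by
  induction n with
  | zero => simp [rademacherSum]
  | succ n ih =>
    have h2 : 𝔼 ω, rademacherSum (Fin.tail v) ω ^ 2 = ∑ k, Fin.tail v k ^ 2 := by
      simpa only [sq] using expect_rademacherSum_mul (Fin.tail v) (Fin.tail v)
    set a := v 0
    set S := ∑ k, Fin.tail v k ^ 2
    have hS : 0 ≤ S := sum_nonneg fun _ _ => sq_nonneg _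
    calc 𝔼 ω, rademacherSum v ω ^ 4
        = 𝔼 ω, (rademacherSum (Fin.tail v) ω ^ 4
            + 6 * a ^ 2 * rademacherSum (Fin.tail v) ω ^ 2 + a ^ 4) := by
          rw [expect_fin_succ, expect_comm]
          refine expect_congr rfl fun ω _ => ?_
          rw [expect_bool, rademacherSum_cons, rademacherSum_cons]
          simp only [rademacher]; norm_num; ring
      _ = 𝔼 ω, rademacherSum (Fin.tail v) ω ^ 4 + 6 * a ^ 2 * S + a ^ 4 := by
          rw [expect_add_distrib, expect_add_distrib, ← mul_expect, h2, Fintype.expect_const]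
      _ ≤ 3 * S ^ 2 + 6 * a ^ 2 * S + a ^ 4 := by gcongr; exact ih _
      _ ≤ 3 * (a ^ 2 + S) ^ 2 := by nlinarith [sq_nonneg a]
      _ = 3 * (∑ k, v k ^ 2) ^ 2 := by rw [Fin.sum_univ_succ]; rfl

end Rademacher

section L2

variable {Ω : Type*} [Fintype Ω]

noncomputable def toL2 (f : Ω → ℝ) : EuclideanSpace ℝ Ω :=
  WithLp.toLp 2 fun ω => f ω / √(Fintype.card Ω)

theorem toL2_sub (f g : Ω → ℝ) : toL2 (f - g) = toL2 f - toL2 g := by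
  ext ω
  simp [toL2, sub_div]

theorem inner_toL2 (f g : Ω → ℝ) : ⟪toL2 f, toL2 g⟫_ℝ = 𝔼 ω, f ω * g ω := by
  rw [Fintype.expect_eq_sum_div_card, sum_div]
  refine sum_congr rfl fun ω _ => ?_
  simp only [toL2, conj_trivial, RCLike.inner_apply]
  rw [div_mul_div_comm, Real.mul_self_sqrt (Nat.cast_nonneg _), mul_comm]

theorem norm_toL2_sq (f : Ω → ℝ) : ‖toL2 f‖ ^ 2 = 𝔼 ω, f ω ^ 2 := by
  rw [← real_inner_self_eq_norm_sq, inner_toL2]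
  simp only [sq]

theorem norm_toL2_le_of_abs_le {f g : Ω → ℝ} (h : ∀ ω, |f ω| ≤ |g ω|) :
    ‖toL2 f‖ ≤ ‖toL2 g‖ := by
  rw [← sq_le_sq₀ (norm_nonneg _) (norm_nonneg _), norm_toL2_sq, norm_toL2_sq]
  exact expect_le_expect fun ω _ => sq_le_sq.2 (h ω)

theorem abs_sum_inner_toL2_le_mul_signSup [Nonempty Ω] {M : ℕ} (T : Matrix (Fin M) (Fin M) ℝ)
    {C D : ℝ} (hC : 0 < C) (hD : 0 < D) {a b : Fin M → Ω → ℝ}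
    (ha : ∀ i ω, |a i ω| ≤ C) (hb : ∀ j ω, |b j ω| ≤ D) :
    |∑ i, ∑ j, T i j * ⟪toL2 (a i), toL2 (b j)⟫_ℝ| ≤ C * D * signSup T := by
  have hrw : ∑ i, ∑ j, T i j * ⟪toL2 (a i), toL2 (b j)⟫_ℝ =
      𝔼 ω, ∑ i, ∑ j, T i j * a i ω * b j ω := by
    simp_rw [inner_toL2, mul_expect, ← expect_sum_comm]
    exact expect_congr rfl fun _ _ => sum_congr rfl fun _ _ => sum_congr rfl fun _ _ => by ring
  rw [hrw]
  exact (abs_expect_le _ _).trans <| expect_le univ_nonempty fun ω _ =>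
    abs_sum_mul_le_mul_signSup T hC hD (fun i => ha i ω) (fun j => hb j ω)

end L2

section Clip

variable {R : ℝ}

def clip (R t : ℝ) : ℝ := max (-R) (min R t)

theorem abs_clip_le (hR : 0 ≤ R) (t : ℝ) : |clip R t| ≤ R :=
  abs_le.2 ⟨le_max_left _ _, max_le (by linarith) (min_le_left _ _)⟩

theorem abs_clip_le_abs (hR : 0 ≤ R) (t : ℝ) : |clip R t| ≤ |t| := by
  unfold clip
  rcases le_total t (-R) with h | h
  · rw [min_eq_right (by linarith), max_eq_left h, abs_neg, abs_of_nonneg hR,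
      abs_of_nonpos (by linarith)]
    linarith
  rcases le_total t R with h' | h'
  · rw [min_eq_right h', max_eq_right h]
  · rw [min_eq_left h', max_eq_right (by linarith), abs_of_nonneg hR, abs_of_nonneg (by linarith)]
    exact h'

theorem sq_sub_clip_mul_sq_le (hR : 0 ≤ R) (t : ℝ) : (t - clip R t) ^ 2 * R ^ 2 ≤ t ^ 4 := by
  unfold clip
  rw [show t ^ 4 = t ^ 2 * t ^ 2 by ring]
  rcases le_total t (-R) with h | h
  · rw [min_eq_right (by linarith), max_eq_left h, sub_neg_eq_add]
    exact mul_le_mul (by nlinarith) (by nlinarith) (sq_nonneg _) (sq_nonneg _)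
  rcases le_total t R with h' | h'
  · rw [min_eq_right h', max_eq_right h, sub_self]
    nlinarith
  · rw [min_eq_left h', max_eq_right (by linarith)]
    exact mul_le_mul (by nlinarith) (by nlinarith) (sq_nonneg _) (sq_nonneg _)

end Clip

section Truncation

variable {n : ℕ}

theorem inner_toL2_rademacherSum (u v : EuclideanSpace ℝ (Fin n)) :
    ⟪toL2 (rademacherSum u), toL2 (rademacherSum v)⟫_ℝ = ⟪u, v⟫_ℝ := by
  rw [inner_toL2, expect_rademacherSum_mul]
  simp [PiLp.inner_apply, mul_comm]

theorem norm_toL2_rademacherSum (v : EuclideanSpace ℝ (Fin n)) :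
    ‖toL2 (rademacherSum v)‖ = ‖v‖ := by
  rw [norm_eq_sqrt_real_inner, inner_toL2_rademacherSum, ← norm_eq_sqrt_real_inner]

theorem norm_toL2_rademacherSum_sub_clip_le {v : EuclideanSpace ℝ (Fin n)} (hv : ‖v‖ ≤ 1) :
    ‖toL2 (rademacherSum v) - toL2 (clip √48 ∘ rademacherSum v)‖ ≤ 1 / 4 := by
  have hR : √48 ^ 2 = 48 := Real.sq_sqrt (by norm_num)
  have hv2 : ∑ k, v k ^ 2 ≤ 1 := by
    have := EuclideanSpace.norm_sq_eq v
    simp only [Real.norm_eq_abs, sq_abs] at this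
    nlinarith [norm_nonneg v]
  rw [← toL2_sub, ← sq_le_sq₀ (norm_nonneg _) (by norm_num), norm_toL2_sq]
  calc 𝔼 ω, (rademacherSum v - clip √48 ∘ rademacherSum v) ω ^ 2
      ≤ 𝔼 ω, rademacherSum v ω ^ 4 / 48 := expect_le_expect fun ω _ => by
        rw [le_div_iff₀ (by norm_num)]
        simpa [hR] using sq_sub_clip_mul_sq_le (Real.sqrt_nonneg 48) (rademacherSum v ω)
    _ = (𝔼 ω, rademacherSum v ω ^ 4) / 48 := (expect_div _ _ _).symm
    _ ≤ 3 * 1 ^ 2 / 48 := by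
        gcongr
        exact (expect_rademacherSum_pow_four_le _).trans (by gcongr)
    _ = (1 / 4) ^ 2 := by norm_num

end Truncation

theorem GrothendieckBound.improve {M : ℕ} {K : ℝ} (h : GrothendieckBound M K) :
    GrothendieckBound M (48 + K / 2) := by
  intro n T x y hx hy
  have hR : 0 < √48 := by positivity
  let X i := toL2 (rademacherSum (x i))
  let Y j := toL2 (rademacherSum (y j))
  let P i := toL2 (clip √48 ∘ rademacherSum (x i))
  let Q j := toL2 (clip √48 ∘ rademacherSum (y j))
  have hsplit : ∀ i j, ⟪x i, y j⟫_ℝ = ⟪P i, Q j⟫_ℝ + ⟪X i - P i, Y j⟫_ℝ + ⟪P i, Y j - Q j⟫_ℝ := by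
    intro i j
    rw [← inner_toL2_rademacherSum, inner_sub_left, inner_sub_right]
    ring
  have hPQ : |∑ i, ∑ j, T i j * ⟪P i, Q j⟫_ℝ| ≤ 48 * signSup T := by
    have := abs_sum_inner_toL2_le_mul_signSup T hR hR
      (a := fun i => clip √48 ∘ rademacherSum (x i)) (b := fun j => clip √48 ∘ rademacherSum (y j))
      (fun i _ => abs_clip_le hR.le _) (fun j _ => abs_clip_le hR.le _)
    rwa [Real.mul_self_sqrt (by norm_num)] at this
  have hP i : ‖P i‖ ≤ 1 := (norm_toL2_le_of_abs_le fun _ => abs_clip_le_abs hR.le _).trans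
    ((norm_toL2_rademacherSum _).trans_le (hx i))
  have hY j : ‖Y j‖ ≤ 1 := (norm_toL2_rademacherSum _).trans_le (hy j)
  have hUY := h.abs_sum_inner_le_of_norm_le T (by norm_num) one_pos
    (fun i => norm_toL2_rademacherSum_sub_clip_le (hx i)) hY
  have hPV := h.abs_sum_inner_le_of_norm_le T one_pos (by norm_num) hP
    (fun j => norm_toL2_rademacherSum_sub_clip_le (hy j))
  calc |∑ i, ∑ j, T i j * ⟪x i, y j⟫_ℝ|
      = |∑ i, ∑ j, T i j * ⟪P i, Q j⟫_ℝ + ∑ i, ∑ j, T i j * ⟪X i - P i, Y j⟫_ℝ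
          + ∑ i, ∑ j, T i j * ⟪P i, Y j - Q j⟫_ℝ| := by
        simp only [hsplit, mul_add, sum_add_distrib]
    _ ≤ 48 * signSup T + K * (1 / 4) * 1 * signSup T + K * 1 * (1 / 4) * signSup T :=
        (abs_add_three _ _ _).trans (add_le_add_three hPQ hUY hPV)
    _ = (48 + K / 2) * signSup T := by ring

theorem le_csInf_mul {S : Set ℝ} (hS : S.Nonempty) {a b : ℝ} (hb : 0 ≤ b)
    (h : ∀ K ∈ S, a ≤ K * b) : a ≤ sInf S * b := by
  obtain ⟨K₀, hK₀⟩ := hS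
  rcases hb.eq_or_lt with rfl | hb
  · simpa using h K₀ hK₀
  rw [← div_le_iff₀ hb]
  exact le_csInf ⟨K₀, hK₀⟩ fun K hK => (div_le_iff₀ hb).2 (h K hK)

theorem grothendieckBound_ninety_six (M : ℕ) : GrothendieckBound M 96 := by
  let S := {K : ℝ | 0 ≤ K ∧ GrothendieckBound M K}
  have hS : S.Nonempty := ⟨M ^ 2, by positivity, grothendieckBound_sq M⟩
  have hinf : GrothendieckBound M (sInf S) := fun n T x y hx hy =>
    le_csInf_mul hS (signSup_nonneg T) fun K hK => hK.2 n T x y hx hy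
  have hS0 : 0 ≤ sInf S := Real.sInf_nonneg fun K hK => hK.1
  have : sInf S ≤ 48 + sInf S / 2 := csInf_le ⟨0, fun K hK => hK.1⟩ ⟨by positivity, hinf.improve⟩
  exact hinf.mono (by linarith)

end Grothendieck

theorem grothendieck_inequality (H : Type*) [NormedAddCommGroup H] [InnerProductSpace ℝ H]
    (M : ℕ) (T : Matrix (Fin M) (Fin M) ℝ) (x y : Fin M → H)
    (hx : ∀ i, ‖x i‖ ≤ 1) (hy : ∀ j, ‖y j‖ ≤ 1) :
    |∑ i, ∑ j, T i j * (inner ℝ (x i) (y j) : ℝ)| ≤ realGrothendieckConstant * signSup T := by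
  refine Grothendieck.le_csInf_mul ?_ (Grothendieck.signSup_nonneg T) ?_
  · exact ⟨96, by norm_num, fun n M => Grothendieck.grothendieckBound_ninety_six M n⟩
  rintro K ⟨-, hK⟩
  exact Grothendieck.GrothendieckBound.abs_sum_inner_le (fun n => hK n M) T hx hy
end

section
/- Let A be a finite-dimensional normed space, ρ ∈ A a fixed element, and ρ* ∈ A* a fixed functional with ρ*(ρ) = c > 0. Suppose G is a compact topological group acting by linear isometries on A such that g·ρ = ρ for all g ∈ G, and such that any functional L ∈ A* satisfying L ∘ g = L for all g ∈ G is a scalar multiple of ρ*. Then ‖ρ‖_A · ‖ρ*‖_{A*} = c. -/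
/-!
Take a norming functional `L` for `ρ` (`‖L‖ ≤ 1`, `L ρ = ‖ρ‖`) and average it over the Haar
probability measure of `G`. The average `L₀ a = ∫ L (g⁻¹ • a) dg` is invariant, still has norm at
most `1`, and still satisfies `L₀ ρ = ‖ρ‖` because `ρ` is fixed. By hypothesis `L₀ = λ • ρ*`;
evaluating at `ρ` gives `‖ρ‖ = |λ| c`, hence `‖ρ‖ ‖ρ*‖ = c ‖L₀‖ ≤ c`. The reverse inequality is
`c = ρ* ρ ≤ ‖ρ*‖ ‖ρ‖`.
-/

open MeasureTheory TopologicalSpace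

theorem ContinuousLinearMap.norm_apply_linearIsometry_le {𝕜 E F H : Type*} [RCLike 𝕜]
    [SeminormedAddCommGroup E] [SeminormedAddCommGroup F] [SeminormedAddCommGroup H]
    [NormedSpace 𝕜 E] [NormedSpace 𝕜 F] [NormedSpace 𝕜 H]
    (L : F →L[𝕜] H) (e : E →ₗᵢ[𝕜] F) (a : E) : ‖L (e a)‖ ≤ ‖L‖ * ‖a‖ :=
  (L.le_opNorm _).trans_eq (by rw [e.norm_map])

section InvariantAverage

variable {𝕜 A G : Type*} [RCLike 𝕜] [NormedAddCommGroup A] [NormedSpace 𝕜 A]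
  [Group G] [TopologicalSpace G] [MeasurableSpace G]
  (μ : Measure G) [IsProbabilityMeasure μ] (φ : G → A ≃ₗᵢ[𝕜] A)

theorem integrable_apply_inv_smul [ContinuousInv G] [OpensMeasurableSpace G]
    (hcont : ∀ a, Continuous fun g => φ g a) (L : A →L[𝕜] 𝕜) (a : A) :
    Integrable (fun g => L (φ g⁻¹ a)) μ :=
  .of_bound (L.continuous.comp ((hcont a).comp continuous_inv)).aestronglyMeasurable
    (‖L‖ * ‖a‖) (.of_forall fun g => L.norm_apply_linearIsometry_le (φ g⁻¹).toLinearIsometry a)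

noncomputable def invariantAverage [ContinuousInv G] [OpensMeasurableSpace G]
    (hcont : ∀ a, Continuous fun g => φ g a) (L : A →L[𝕜] 𝕜) : A →L[𝕜] 𝕜 :=
  LinearMap.mkContinuous
    { toFun a := ∫ g, L (φ g⁻¹ a) ∂μ
      map_add' a b := by
        simp only [map_add]
        exact integral_add (integrable_apply_inv_smul μ φ hcont L a)
          (integrable_apply_inv_smul μ φ hcont L b)
      map_smul' r a := by
        simp only [map_smul, smul_eq_mul, RingHom.id_apply]
        exact integral_const_mul r _ }
    ‖L‖ fun a => by
      simpa using norm_integral_le_of_norm_le_const (μ := μ)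
        (.of_forall fun g => L.norm_apply_linearIsometry_le (φ g⁻¹).toLinearIsometry a)

variable [ContinuousInv G] [OpensMeasurableSpace G] (hcont : ∀ a, Continuous fun g => φ g a)

theorem invariantAverage_apply (L : A →L[𝕜] 𝕜) (a : A) :
    invariantAverage μ φ hcont L a = ∫ g, L (φ g⁻¹ a) ∂μ :=
  rfl

theorem norm_invariantAverage_le (L : A →L[𝕜] 𝕜) : ‖invariantAverage μ φ hcont L‖ ≤ ‖L‖ :=
  LinearMap.mkContinuous_norm_le _ (norm_nonneg L) _

theorem invariantAverage_apply_of_forall_fixed (L : A →L[𝕜] 𝕜) {a : A}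
    (hfix : ∀ g, φ g a = a) : invariantAverage μ φ hcont L a = L a := by
  simp [invariantAverage_apply, hfix]

theorem invariantAverage_apply_smul [MeasurableMul G] [μ.IsMulLeftInvariant]
    (hhom : ∀ g h : G, ∀ a : A, φ (g * h) a = φ g (φ h a)) (L : A →L[𝕜] 𝕜) (h : G) (a : A) :
    invariantAverage μ φ hcont L (φ h a) = invariantAverage μ φ hcont L a := by
  have hshift : ∀ g : G, φ g⁻¹ (φ h a) = φ (h⁻¹ * g)⁻¹ a := fun g => by
    rw [← hhom, mul_inv_rev, inv_inv]
  simp only [invariantAverage_apply, hshift]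
  exact integral_mul_left_eq_self (fun g => L (φ g⁻¹ a)) h⁻¹

end InvariantAverage

theorem norm_mul_norm_le_of_eq_smul {𝕜 A : Type*} [RCLike 𝕜] [NormedAddCommGroup A]
    [NormedSpace 𝕜 A] {ρ : A} {ρs L : A →L[𝕜] 𝕜} {lam : 𝕜} {c : ℝ} (hc : 0 ≤ c)
    (hpair : ρs ρ = c) (hL : L = lam • ρs) (hLρ : L ρ = ‖ρ‖) (hLnorm : ‖L‖ ≤ 1) :
    ‖ρ‖ * ‖ρs‖ ≤ c := by
  have hρ : ‖ρ‖ = ‖lam‖ * c := by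
    simpa [hL, hpair, abs_of_nonneg hc] using (congrArg norm hLρ).symm
  calc ‖ρ‖ * ‖ρs‖ = c * ‖L‖ := by rw [hρ, hL, norm_smul]; ring
    _ ≤ c := mul_le_of_le_one_right hc hLnorm

theorem norm_mul_dualNorm_of_invariant_general
    (A : Type*) [NormedAddCommGroup A] [NormedSpace ℂ A]
    (G : Type*) [Group G] [TopologicalSpace G] [CompactSpace G] [IsTopologicalGroup G]
    (φ : G → (A ≃ₗᵢ[ℂ] A))
    (hhom : ∀ g h : G, ∀ a : A, φ (g * h) a = φ g (φ h a))
    (hcont : Continuous fun p : G × A => φ p.1 p.2)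
    (ρ : A) (ρs : A →L[ℂ] ℂ) (c : ℝ) (hc : 0 < c) (hpair : ρs ρ = (c : ℂ))
    (hfix : ∀ g : G, φ g ρ = ρ)
    (hinv : ∀ L : A →L[ℂ] ℂ, (∀ (g : G) (a : A), L (φ g a) = L a) →
      ∃ lam : ℂ, L = lam • ρs) :
    ‖ρ‖ * ‖ρs‖ = c := by
  borelize G
  let μ : Measure G := Measure.haarMeasure ⊤
  have : IsProbabilityMeasure μ :=
    ⟨by simpa using Measure.haarMeasure_self (K₀ := (⊤ : PositiveCompacts G))⟩
  have hcont' : ∀ a, Continuous fun g => φ g a := fun a =>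
    hcont.comp (continuous_id.prodMk continuous_const)
  obtain ⟨L, hL1, hLρ⟩ := exists_dual_vector'' ℂ ρ
  obtain ⟨lam, hlam⟩ := hinv _ (invariantAverage_apply_smul μ φ hcont' hhom L)
  refine le_antisymm (norm_mul_norm_le_of_eq_smul hc.le hpair hlam ?_ ?_) ?_
  · rw [invariantAverage_apply_of_forall_fixed μ φ hcont' L hfix, hLρ]
  · exact (norm_invariantAverage_le μ φ hcont' L).trans hL1
  · calc c = ‖ρs ρ‖ := by simp [hpair, abs_of_pos hc]
      _ ≤ ‖ρs‖ * ‖ρ‖ := ρs.le_opNorm ρ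
      _ = ‖ρ‖ * ‖ρs‖ := mul_comm _ _

/-- Averaging lemma: if a compact group `G` acts on a finite-dimensional normed space `A`
by linear isometries fixing `ρ`, and every `G`-invariant functional is a multiple of `ρ*`,
then `‖ρ‖_A · ‖ρ*‖_{A*} = c` where `c = ρ*(ρ) > 0`. -/
theorem norm_mul_dualNorm_of_invariant
    (A : Type*) [NormedAddCommGroup A] [NormedSpace ℂ A] [FiniteDimensional ℂ A]
    (G : Type*) [Group G] [TopologicalSpace G] [CompactSpace G] [IsTopologicalGroup G]
    (φ : G → (A ≃ₗᵢ[ℂ] A))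
    (hhom : ∀ g h : G, ∀ a : A, φ (g * h) a = φ g (φ h a))
    (hcont : Continuous fun p : G × A => φ p.1 p.2)
    (ρ : A) (ρs : A →L[ℂ] ℂ) (c : ℝ) (hc : 0 < c) (hpair : ρs ρ = (c : ℂ))
    (hfix : ∀ g : G, φ g ρ = ρ)
    (hinv : ∀ L : A →L[ℂ] ℂ, (∀ (g : G) (a : A), L (φ g a) = L a) →
      ∃ lam : ℂ, L = lam • ρs) :
    ‖ρ‖ * ‖ρs‖ = c :=
  norm_mul_dualNorm_of_invariant_general A G φ hhom hcont ρ ρs c hc hpair hfix hinv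
end

section
/- Let A_{ij} ∈ M_m (1 ≤ i,j ≤ N) and consider x = ∑_{ij} A_{ij} ⊗ |ij⟩ ∈ M_m ⊗ (RC_N ⊗_min RC_N), where RC_N = R_N ∩ C_N. Then ‖x‖ = max of the four quantities: ‖∑_{ij} A_{ij}A_{ij}†‖^{1/2}, ‖∑_{ij} A_{ij}†A_{ij}‖^{1/2}, ‖∑_{ij} A_{ij} ⊗ |i⟩⟨j|‖_{M_m⊗M_N}, and ‖∑_{ij} A_{ij} ⊗ |j⟩⟨i|‖_{M_m⊗M_N}. -/
open scoped BigOperators Matrix Kronecker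

/-- The operator norm (`ℓ²→ℓ²`) of a complex matrix. -/
noncomputable def matOpNorm {ι : Type*} [Fintype ι] [DecidableEq ι] (A : Matrix ι ι ℂ) : ℝ :=
  ‖Matrix.toEuclideanCLM (𝕜 := ℂ) A‖

/-- The row embedding `|i⟩ ↦ |0⟩⟨i|` of `R_N` into `M_N`. -/
noncomputable def rowEmb {N : ℕ} [NeZero N] (i : Fin N) : Matrix (Fin N) (Fin N) ℂ :=
  Matrix.single 0 i 1

/-- The column embedding `|i⟩ ↦ |i⟩⟨0|` of `C_N` into `M_N`. -/
noncomputable def colEmb {N : ℕ} [NeZero N] (i : Fin N) : Matrix (Fin N) (Fin N) ℂ :=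
  Matrix.single i 0 1

/-!
Each of the four matrices representing `x` has nonzero entries only in a block of rows and a
block of columns, and deleting zero rows and columns does not change the operator norm (the
matrix is the remaining block conjugated by coordinate isometries). What remains is: for
`R ⊗ R` the block row `[A_ij]`, whose norm is `‖∑ A_ij A_ij†‖^{1/2}` by the C*-identity; for
`C ⊗ C` the block column, of norm `‖∑ A_ij† A_ij‖^{1/2}`; for `C ⊗ R` and `R ⊗ C` the block
matrices `∑ A_ij ⊗ |i⟩⟨j|` and `∑ A_ij ⊗ |j⟩⟨i|`.
-/

open scoped Matrix.Norms.L2Operator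

namespace Matrix

variable {𝕜 : Type*} [RCLike 𝕜] {k l k' l' : Type*} [Fintype k] [Fintype l] [Fintype k']
  [Fintype l'] [DecidableEq k] [DecidableEq l]

lemma l2_opNorm_mul_of_conjTranspose_mul_self_eq_one {U : Matrix k' k 𝕜} (hU : Uᴴ * U = 1)
    (X : Matrix k l 𝕜) : ‖U * X‖ = ‖X‖ := by
  have h : ‖U * X‖ * ‖U * X‖ = ‖X‖ * ‖X‖ := by
    rw [← l2_opNorm_conjTranspose_mul_self, ← l2_opNorm_conjTranspose_mul_self,
      conjTranspose_mul, Matrix.mul_assoc, ← Matrix.mul_assoc Uᴴ, hU, Matrix.one_mul]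
  exact (mul_self_inj (norm_nonneg _) (norm_nonneg _)).mp h

lemma l2_opNorm_mul_conjTranspose_of_conjTranspose_mul_self_eq_one [DecidableEq l']
    {V : Matrix l' l 𝕜} (hV : Vᴴ * V = 1) (X : Matrix k l 𝕜) : ‖X * Vᴴ‖ = ‖X‖ := by
  rw [← l2_opNorm_conjTranspose, conjTranspose_mul, conjTranspose_conjTranspose,
    l2_opNorm_mul_of_conjTranspose_mul_self_eq_one hV, l2_opNorm_conjTranspose]

omit [Fintype k] [DecidableEq l] in
lemma conjTranspose_mul_self_submatrix_one [DecidableEq k'] {f : k → k'} (hf : f.Injective) :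
    ((1 : Matrix k' k' 𝕜).submatrix id f)ᴴ * (1 : Matrix k' k' 𝕜).submatrix id f = 1 := by
  ext a b
  simp [mul_apply, one_apply, hf.eq_iff]

lemma l2_opNorm_submatrix_of_support [DecidableEq k'] [DecidableEq l'] {M : Matrix k' l' 𝕜}
    {f : k → k'} {e : l → l'} (hf : f.Injective) (he : e.Injective)
    (hM : ∀ x y, M x y ≠ 0 → x ∈ Set.range f ∧ y ∈ Set.range e) :
    ‖M.submatrix f e‖ = ‖M‖ := by
  set U := (1 : Matrix k' k' 𝕜).submatrix id f
  set V := (1 : Matrix l' l' 𝕜).submatrix id e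
  have hpad : M = U * (M.submatrix f e * Vᴴ) := by
    ext x y
    by_cases hxy : x ∈ Set.range f ∧ y ∈ Set.range e
    · obtain ⟨⟨a, rfl⟩, ⟨b, rfl⟩⟩ := hxy
      simp [U, V, mul_apply, one_apply, hf.eq_iff, he.eq_iff]
    · rw [show M x y = 0 from by_contra fun h => hxy (hM x y h)]
      rcases not_and_or.mp hxy with hx | hy
      · simp [U, mul_apply, fun a => Ne.symm (not_exists.mp hx a)]
      · simp [V, mul_apply, not_exists.mp hy]
  conv_rhs => rw [hpad]
  rw [l2_opNorm_mul_of_conjTranspose_mul_self_eq_one (conjTranspose_mul_self_submatrix_one hf),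
    l2_opNorm_mul_conjTranspose_of_conjTranspose_mul_self_eq_one
      (conjTranspose_mul_self_submatrix_one he)]

section Block

variable {α : Type*} [NonUnitalNonAssocSemiring α] [Star α] {m n ι : Type*} [Fintype ι]

def blockRow (A : ι → Matrix m n α) : Matrix m (n × ι) α := of fun a p => A p.2 a p.1

def blockCol (A : ι → Matrix m n α) : Matrix (m × ι) n α := of fun p b => A p.2 p.1 b

lemma blockRow_mul_conjTranspose [Fintype n] (A : ι → Matrix m n α) :
    blockRow A * (blockRow A)ᴴ = ∑ i, A i * (A i)ᴴ := by
  ext a b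
  simp [blockRow, mul_apply, sum_apply, Fintype.sum_prod_type, Finset.sum_comm (γ := n)]

lemma conjTranspose_blockCol_mul [Fintype m] (A : ι → Matrix m n α) :
    (blockCol A)ᴴ * blockCol A = ∑ i, (A i)ᴴ * A i := by
  ext a b
  simp [blockCol, mul_apply, sum_apply, Fintype.sum_prod_type, Finset.sum_comm (γ := m)]

end Block

section Norm

variable {𝕜 : Type*} [RCLike 𝕜] {m n ι : Type*} [Fintype m] [Fintype n] [DecidableEq n]
  [Fintype ι]

lemma l2_opNorm_eq_sqrt_conjTranspose_mul_self (B : Matrix m n 𝕜) : ‖B‖ = √‖Bᴴ * B‖ := by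
  rw [l2_opNorm_conjTranspose_mul_self, Real.sqrt_mul_self (norm_nonneg _)]

lemma l2_opNorm_eq_sqrt_mul_conjTranspose_self [DecidableEq m] (B : Matrix m n 𝕜) :
    ‖B‖ = √‖B * Bᴴ‖ := by
  rw [← l2_opNorm_conjTranspose B, l2_opNorm_eq_sqrt_conjTranspose_mul_self,
    conjTranspose_conjTranspose]

lemma l2_opNorm_blockRow [DecidableEq m] [DecidableEq ι] (A : ι → Matrix m n 𝕜) :
    ‖blockRow A‖ = √‖∑ i, A i * (A i)ᴴ‖ := by
  rw [l2_opNorm_eq_sqrt_mul_conjTranspose_self, blockRow_mul_conjTranspose]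

lemma l2_opNorm_blockCol (A : ι → Matrix m n 𝕜) :
    ‖blockCol A‖ = √‖∑ i, (A i)ᴴ * A i‖ := by
  rw [l2_opNorm_eq_sqrt_conjTranspose_mul_self, conjTranspose_blockCol_mul]

end Norm

lemma exists_ne_zero_of_sum_kronecker_kronecker_apply_ne_zero {α : Type*}
    [NonUnitalNonAssocSemiring α] {ι κ m n r s r' s' : Type*} [Fintype ι] [Fintype κ]
    {A : ι → κ → Matrix m n α} {E : ι → Matrix r s α} {F : κ → Matrix r' s' α}
    {a : m} {b : n} {p : r} {p' : s} {q : r'} {q' : s'}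
    (h : (∑ i, ∑ j, A i j ⊗ₖ (E i ⊗ₖ F j)) (a, p, q) (b, p', q') ≠ 0) :
    ∃ i j, E i p p' ≠ 0 ∧ F j q q' ≠ 0 := by
  simp only [sum_apply, kronecker_apply] at h
  obtain ⟨i, -, hi⟩ := Finset.exists_ne_zero_of_sum_ne_zero h
  obtain ⟨j, -, hj⟩ := Finset.exists_ne_zero_of_sum_ne_zero hi
  exact ⟨i, j, ne_zero_and_ne_zero_of_mul (right_ne_zero_of_mul hj)⟩

end Matrix

open Matrix

lemma matOpNorm_eq_l2_opNorm {ι : Type*} [Fintype ι] [DecidableEq ι] (A : Matrix ι ι ℂ) :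
    matOpNorm A = ‖A‖ := rfl

section Embeddings

variable {N : ℕ} [NeZero N]

lemma rowEmb_apply_ne_zero {i x y : Fin N} (h : rowEmb i x y ≠ 0) : x = 0 ∧ y = i := by
  by_contra hxy
  exact h (if_neg fun hc => hxy ⟨hc.1.symm, hc.2.symm⟩)

lemma colEmb_apply_ne_zero {i x y : Fin N} (h : colEmb i x y ≠ 0) : x = i ∧ y = 0 := by
  by_contra hxy
  exact h (if_neg fun hc => hxy ⟨hc.1.symm, hc.2.symm⟩)

variable {m : ℕ} (A : Fin N → Fin N → Matrix (Fin m) (Fin m) ℂ)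

lemma matOpNorm_sum_kronecker_rowEmb_rowEmb :
    matOpNorm (∑ i, ∑ j, A i j ⊗ₖ (rowEmb i ⊗ₖ rowEmb j)) =
      √(matOpNorm (∑ i, ∑ j, A i j * (A i j)ᴴ)) := by
  set X := ∑ i, ∑ j, A i j ⊗ₖ (rowEmb i ⊗ₖ rowEmb j)
  have hsupp : ∀ x y, X x y ≠ 0 →
      x ∈ Set.range (fun a : Fin m => (a, ((0 : Fin N), (0 : Fin N)))) ∧ y ∈ Set.range id := by
    rintro ⟨a, p, q⟩ y h
    obtain ⟨i, j, hi, hj⟩ := exists_ne_zero_of_sum_kronecker_kronecker_apply_ne_zero h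
    rw [(rowEmb_apply_ne_zero hi).1, (rowEmb_apply_ne_zero hj).1]
    exact ⟨⟨a, rfl⟩, ⟨y, rfl⟩⟩
  have hX : X.submatrix (fun a => (a, 0, 0)) id = blockRow fun p => A p.1 p.2 := by
    ext a ⟨b, i, j⟩
    simp [X, blockRow, rowEmb, single_apply, Matrix.sum_apply]
  rw [matOpNorm_eq_l2_opNorm, matOpNorm_eq_l2_opNorm, ← l2_opNorm_submatrix_of_support
    (Prod.mk_left_injective _) Function.injective_id hsupp, hX, l2_opNorm_blockRow,
    Fintype.sum_prod_type]

lemma matOpNorm_sum_kronecker_colEmb_colEmb :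
    matOpNorm (∑ i, ∑ j, A i j ⊗ₖ (colEmb i ⊗ₖ colEmb j)) =
      √(matOpNorm (∑ i, ∑ j, (A i j)ᴴ * A i j)) := by
  set X := ∑ i, ∑ j, A i j ⊗ₖ (colEmb i ⊗ₖ colEmb j)
  have hsupp : ∀ x y, X x y ≠ 0 →
      x ∈ Set.range id ∧ y ∈ Set.range (fun b : Fin m => (b, ((0 : Fin N), (0 : Fin N)))) := by
    rintro x ⟨b, p, q⟩ h
    obtain ⟨i, j, hi, hj⟩ := exists_ne_zero_of_sum_kronecker_kronecker_apply_ne_zero h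
    rw [(colEmb_apply_ne_zero hi).2, (colEmb_apply_ne_zero hj).2]
    exact ⟨⟨x, rfl⟩, ⟨b, rfl⟩⟩
  have hX : X.submatrix id (fun b => (b, 0, 0)) = blockCol fun p => A p.1 p.2 := by
    ext ⟨a, i, j⟩ b
    simp [X, blockCol, colEmb, single_apply, Matrix.sum_apply]
  rw [matOpNorm_eq_l2_opNorm, matOpNorm_eq_l2_opNorm, ← l2_opNorm_submatrix_of_support
    Function.injective_id (Prod.mk_left_injective _) hsupp, hX, l2_opNorm_blockCol,
    Fintype.sum_prod_type]

lemma matOpNorm_sum_kronecker_rowEmb_colEmb :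
    matOpNorm (∑ i, ∑ j, A i j ⊗ₖ (rowEmb i ⊗ₖ colEmb j)) =
      matOpNorm (∑ i, ∑ j, A i j ⊗ₖ single j i (1 : ℂ)) := by
  set X := ∑ i, ∑ j, A i j ⊗ₖ (rowEmb i ⊗ₖ colEmb j)
  have hsupp : ∀ x y, X x y ≠ 0 →
      x ∈ Set.range (Prod.map (id : Fin m → Fin m) (Prod.mk (0 : Fin N))) ∧
        y ∈ Set.range (Prod.map (id : Fin m → Fin m) fun i : Fin N => (i, (0 : Fin N))) := by
    rintro ⟨a, p, q⟩ ⟨b, p', q'⟩ h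
    obtain ⟨i, j, hi, hj⟩ := exists_ne_zero_of_sum_kronecker_kronecker_apply_ne_zero h
    rw [(rowEmb_apply_ne_zero hi).1, (colEmb_apply_ne_zero hj).2]
    exact ⟨⟨(a, q), rfl⟩, ⟨(b, p'), rfl⟩⟩
  have hX : X.submatrix (Prod.map id (Prod.mk 0)) (Prod.map id fun i => (i, 0)) =
      ∑ i, ∑ j, A i j ⊗ₖ single j i (1 : ℂ) := by
    ext ⟨a, j⟩ ⟨b, i⟩
    simp [X, rowEmb, colEmb, single_apply, Matrix.sum_apply, ite_and]
  rw [matOpNorm_eq_l2_opNorm, matOpNorm_eq_l2_opNorm, ← hX, l2_opNorm_submatrix_of_support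
    (Function.injective_id.prodMap (Prod.mk_right_injective _))
    (Function.injective_id.prodMap (Prod.mk_left_injective _)) hsupp]

lemma matOpNorm_sum_kronecker_colEmb_rowEmb :
    matOpNorm (∑ i, ∑ j, A i j ⊗ₖ (colEmb i ⊗ₖ rowEmb j)) =
      matOpNorm (∑ i, ∑ j, A i j ⊗ₖ single i j (1 : ℂ)) := by
  set X := ∑ i, ∑ j, A i j ⊗ₖ (colEmb i ⊗ₖ rowEmb j)
  have hsupp : ∀ x y, X x y ≠ 0 →
      x ∈ Set.range (Prod.map (id : Fin m → Fin m) fun i : Fin N => (i, (0 : Fin N))) ∧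
        y ∈ Set.range (Prod.map (id : Fin m → Fin m) (Prod.mk (0 : Fin N))) := by
    rintro ⟨a, p, q⟩ ⟨b, p', q'⟩ h
    obtain ⟨i, j, hi, hj⟩ := exists_ne_zero_of_sum_kronecker_kronecker_apply_ne_zero h
    rw [(colEmb_apply_ne_zero hi).2, (rowEmb_apply_ne_zero hj).1]
    exact ⟨⟨(a, p), rfl⟩, ⟨(b, q'), rfl⟩⟩
  have hX : X.submatrix (Prod.map id fun i => (i, 0)) (Prod.map id (Prod.mk 0)) =
      ∑ i, ∑ j, A i j ⊗ₖ single i j (1 : ℂ) := by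
    ext ⟨a, i⟩ ⟨b, j⟩
    simp [X, rowEmb, colEmb, single_apply, Matrix.sum_apply, ite_and]
  rw [matOpNorm_eq_l2_opNorm, matOpNorm_eq_l2_opNorm, ← hX, l2_opNorm_submatrix_of_support
    (Function.injective_id.prodMap (Prod.mk_left_injective _))
    (Function.injective_id.prodMap (Prod.mk_right_injective _)) hsupp]

end Embeddings

/-- The norm of `x = ∑ A_{ij} ⊗ |ij⟩` in `M_m ⊗_min (RC_N ⊗_min RC_N)` (computed via the
four concrete representations `R⊗R, R⊗C, C⊗R, C⊗C` into matrix algebras) equals the maximum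
of `‖∑ A A†‖^{1/2}`, `‖∑ A†A‖^{1/2}`, `‖∑ A_{ij} ⊗ |i⟩⟨j|‖` and `‖∑ A_{ij} ⊗ |j⟩⟨i|‖`. -/
theorem mm_rc2_norm_eq (m N : ℕ) [NeZero N] (A : Fin N → Fin N → Matrix (Fin m) (Fin m) ℂ) :
    max
      (max (matOpNorm (∑ i, ∑ j, A i j ⊗ₖ (rowEmb i ⊗ₖ rowEmb j)))
           (matOpNorm (∑ i, ∑ j, A i j ⊗ₖ (rowEmb i ⊗ₖ colEmb j))))
      (max (matOpNorm (∑ i, ∑ j, A i j ⊗ₖ (colEmb i ⊗ₖ rowEmb j)))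
           (matOpNorm (∑ i, ∑ j, A i j ⊗ₖ (colEmb i ⊗ₖ colEmb j)))) =
    max
      (max (Real.sqrt (matOpNorm (∑ i, ∑ j, A i j * (A i j)ᴴ)))
           (Real.sqrt (matOpNorm (∑ i, ∑ j, (A i j)ᴴ * A i j))))
      (max (matOpNorm (∑ i, ∑ j, A i j ⊗ₖ Matrix.single i j (1 : ℂ)))
           (matOpNorm (∑ i, ∑ j, A i j ⊗ₖ Matrix.single j i (1 : ℂ)))) := by
  rw [matOpNorm_sum_kronecker_rowEmb_rowEmb, matOpNorm_sum_kronecker_rowEmb_colEmb,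
    matOpNorm_sum_kronecker_colEmb_rowEmb, matOpNorm_sum_kronecker_colEmb_colEmb,
    max_max_max_comm, max_comm (matOpNorm (∑ i, ∑ j, A i j ⊗ₖ single j i (1 : ℂ))),
    max_max_max_comm]
end

section
/- The identity map from (ℓ²_d ⊗_{Δ₂} ℓ²_d ⊗_{Δ₂} ℓ²_d) ⊗_π (ℓ²_d ⊗_{Δ₂} ℓ²_d ⊗_{Δ₂} ℓ²_d) to the sixfold projective tensor product ⊗⁶_π ℓ²_d has norm at least c·d² for a universal constant c > 0. -/
open scoped BigOperators TensorProduct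

/-- The projective tensor norm on `X ⊗ Y`. -/
noncomputable def projNorm2 {X Y : Type*} [NormedAddCommGroup X] [NormedSpace ℂ X]
    [NormedAddCommGroup Y] [NormedSpace ℂ Y] (u : X ⊗[ℂ] Y) : ℝ :=
  sInf {r : ℝ | ∃ (m : ℕ) (x : Fin m → X) (y : Fin m → Y),
    u = ∑ i, x i ⊗ₜ[ℂ] y i ∧ r = ∑ i, ‖x i‖ * ‖y i‖}

variable (d : ℕ)

/-- `ℓ²_d` (complex). -/
abbrev V := EuclideanSpace ℂ (Fin d)

/-- `ℓ²_d ⊗_{Δ₂} ℓ²_d ⊗_{Δ₂} ℓ²_d = ℓ²_{d³}` (Hilbert-Schmidt tensor norm). -/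
abbrev E3 := EuclideanSpace ℂ (Fin d × Fin d × Fin d)

/-- The sixfold projective tensor norm, on the grouping `(V⊗V⊗V) ⊗ (V⊗V⊗V)`:
the infimum of `∑ ∏ norms` over representations as sums of elementary 6-tensors. -/
noncomputable def projNorm6
    (u : (V d ⊗[ℂ] (V d ⊗[ℂ] V d)) ⊗[ℂ] (V d ⊗[ℂ] (V d ⊗[ℂ] V d))) : ℝ :=
  sInf {r : ℝ | ∃ (m : ℕ) (x₁ x₂ x₃ x₄ x₅ x₆ : Fin m → V d),
    u = ∑ i, (x₁ i ⊗ₜ[ℂ] (x₂ i ⊗ₜ[ℂ] x₃ i)) ⊗ₜ[ℂ] (x₄ i ⊗ₜ[ℂ] (x₅ i ⊗ₜ[ℂ] x₆ i)) ∧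
    r = ∑ i, ‖x₁ i‖ * ‖x₂ i‖ * ‖x₃ i‖ * ‖x₄ i‖ * ‖x₅ i‖ * ‖x₆ i‖}

/-- The canonical identification `ℓ²_{d³} → ℓ²_d ⊗ ℓ²_d ⊗ ℓ²_d`, basis to basis. -/
noncomputable def iota : E3 d →ₗ[ℂ] V d ⊗[ℂ] (V d ⊗[ℂ] V d) :=
  (EuclideanSpace.basisFun (Fin d × Fin d × Fin d) ℂ).toBasis.constr ℂ
    (fun p => EuclideanSpace.single p.1 (1 : ℂ) ⊗ₜ[ℂ]
      (EuclideanSpace.single p.2.1 (1 : ℂ) ⊗ₜ[ℂ] EuclideanSpace.single p.2.2 (1 : ℂ)))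



open Finset

lemma sum_exp_eq {ι : Type*} [Fintype ι] [DecidableEq ι] (c : ι → ℝ) (lam : ℝ) :
    ∑ σ : ι → Bool, Real.exp (lam * ∑ p, (if σ p then c p else -c p))
      = ∏ p, (Real.exp (lam * c p) + Real.exp (-(lam * c p))) := by
  have h : ∀ σ : ι → Bool, Real.exp (lam * ∑ p, (if σ p then c p else -c p))
      = ∏ p, Real.exp (lam * (if σ p then c p else -c p)) := by
    intro σ; rw [Finset.mul_sum, Real.exp_sum]
  simp_rw [h]
  have h2 := (Fintype.prod_sum
    (fun p (b : Bool) => Real.exp (lam * if b then c p else -c p))).symm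
  rw [h2]
  refine Finset.prod_congr rfl fun p _ => ?_
  simp [Fintype.sum_bool]

lemma chernoff_one_sided {ι : Type*} [Fintype ι] [DecidableEq ι] (c : ι → ℝ)
    (hc : ∑ p, c p ^ 2 ≤ 1) (t : ℝ) (ht : 0 ≤ t) :
    (((univ : Finset (ι → Bool)).filter
        (fun σ => t ≤ ∑ p, (if σ p then c p else -c p))).card : ℝ)
      ≤ (2 : ℝ) ^ (Fintype.card ι) * Real.exp (-(t ^ 2 / 2)) := by
  set n := Fintype.card ι
  set F := (univ : Finset (ι → Bool)).filter
      (fun σ => t ≤ ∑ p, (if σ p then c p else -c p)) with hF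
  have key : (F.card : ℝ) * Real.exp (t * t) ≤ (2 : ℝ) ^ n * Real.exp (t ^ 2 / 2) := by
    have h1 : (F.card : ℝ) * Real.exp (t * t) ≤
        ∑ σ ∈ F, Real.exp (t * ∑ p, (if σ p then c p else -c p)) := by
      have h0 := Finset.card_nsmul_le_sum F
        (fun σ => Real.exp (t * ∑ p, (if σ p then c p else -c p))) (Real.exp (t * t))
        (fun σ hσ => by
          have hmem : t ≤ ∑ p, (if σ p then c p else -c p) := (Finset.mem_filter.1 hσ).2
          exact Real.exp_le_exp.2 (mul_le_mul_of_nonneg_left hmem ht))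
      rwa [nsmul_eq_mul] at h0
    have h2 : ∑ σ ∈ F, Real.exp (t * ∑ p, (if σ p then c p else -c p)) ≤
        ∑ σ : ι → Bool, Real.exp (t * ∑ p, (if σ p then c p else -c p)) :=
      Finset.sum_le_sum_of_subset_of_nonneg (Finset.filter_subset _ _)
        (fun _ _ _ => (Real.exp_pos _).le)
    have h3 : ∑ σ : ι → Bool, Real.exp (t * ∑ p, (if σ p then c p else -c p))
        = ∏ p, (Real.exp (t * c p) + Real.exp (-(t * c p))) := sum_exp_eq c t
    have h4 : ∏ p, (Real.exp (t * c p) + Real.exp (-(t * c p)))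
        ≤ ∏ p : ι, (2 : ℝ) * Real.exp ((t * c p) ^ 2 / 2) := by
      apply Finset.prod_le_prod
      · intro p _; positivity
      · intro p _
        have := Real.cosh_le_exp_half_sq (t * c p)
        rw [Real.cosh_eq] at this
        nlinarith [this]
    have h5 : ∏ p : ι, (2 : ℝ) * Real.exp ((t * c p) ^ 2 / 2)
        ≤ (2 : ℝ) ^ n * Real.exp (t ^ 2 / 2) := by
      rw [Finset.prod_mul_distrib, Finset.prod_const, ← Real.exp_sum]
      have hs : ∑ p, (t * c p) ^ 2 / 2 ≤ t ^ 2 / 2 := by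
        rw [← Finset.sum_div]
        have he : ∑ p, (t * c p) ^ 2 = t ^ 2 * ∑ p, c p ^ 2 := by
          rw [Finset.mul_sum]; congr 1; ext p; ring
        rw [he]
        nlinarith [sq_nonneg t]
      have hcard : (univ : Finset ι).card = n := rfl
      rw [hcard]
      exact mul_le_mul_of_nonneg_left (Real.exp_le_exp.2 hs) (by positivity)
    calc (F.card : ℝ) * Real.exp (t * t) ≤ _ := h1
      _ ≤ _ := h2
      _ = _ := h3
      _ ≤ _ := h4
      _ ≤ _ := h5
  have hexp : (0:ℝ) < Real.exp (t * t) := Real.exp_pos _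
  have h6 : (F.card : ℝ) ≤ (2 : ℝ) ^ n * Real.exp (t ^ 2 / 2) / Real.exp (t * t) :=
    (le_div_iff₀ hexp).2 key
  calc (F.card : ℝ) ≤ _ := h6
    _ = (2 : ℝ) ^ n * Real.exp (-(t ^ 2 / 2)) := by
        rw [mul_div_assoc, ← Real.exp_sub]
        congr 1
        ring

lemma chernoff_abs {ι : Type*} [Fintype ι] [DecidableEq ι] (c : ι → ℝ)
    (hc : ∑ p, c p ^ 2 ≤ 1) (t : ℝ) (ht : 0 ≤ t) :
    (((univ : Finset (ι → Bool)).filter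
        (fun σ => t ≤ |∑ p, (if σ p then c p else -c p)|)).card : ℝ)
      ≤ 2 * ((2 : ℝ) ^ (Fintype.card ι) * Real.exp (-(t ^ 2 / 2))) := by
  have hsub : (univ : Finset (ι → Bool)).filter
        (fun σ => t ≤ |∑ p, (if σ p then c p else -c p)|) ⊆
      ((univ : Finset (ι → Bool)).filter
        (fun σ => t ≤ ∑ p, (if σ p then c p else -c p))) ∪
      ((univ : Finset (ι → Bool)).filter
        (fun σ => t ≤ ∑ p, (if σ p then (-c) p else -(-c) p))) := by
    intro σ hσ
    have h := (Finset.mem_filter.1 hσ).2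
    rw [Finset.mem_union, Finset.mem_filter, Finset.mem_filter]
    rcases abs_cases (∑ p, (if σ p then c p else -c p)) with ⟨he, _⟩ | ⟨he, _⟩
    · exact Or.inl ⟨Finset.mem_univ _, by rw [he] at h; exact h⟩
    · refine Or.inr ⟨Finset.mem_univ _, ?_⟩
      rw [he] at h
      rw [← Finset.sum_neg_distrib] at h
      refine le_trans h (le_of_eq ?_)
      refine Finset.sum_congr rfl fun p _ => ?_
      by_cases hb : σ p <;> simp [hb]
  have hc' : ∑ p, (-c) p ^ 2 ≤ 1 := by simpa using hc
  have h1 := chernoff_one_sided c hc t ht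
  have h2 := chernoff_one_sided (-c) hc' t ht
  have hcard := Finset.card_union_le
    ((univ : Finset (ι → Bool)).filter (fun σ => t ≤ ∑ p, (if σ p then c p else -c p)))
    ((univ : Finset (ι → Bool)).filter (fun σ => t ≤ ∑ p, (if σ p then (-c) p else -(-c) p)))
  have := Finset.card_le_card hsub
  have hfin : (((univ : Finset (ι → Bool)).filter
        (fun σ => t ≤ |∑ p, (if σ p then c p else -c p)|)).card : ℝ) ≤
      (((univ : Finset (ι → Bool)).filter (fun σ => t ≤ ∑ p, (if σ p then c p else -c p))).card : ℝ)
      + (((univ : Finset (ι → Bool)).filter (fun σ => t ≤ ∑ p, (if σ p then (-c) p else -(-c) p))).card : ℝ) := by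
    exact_mod_cast le_trans this hcard
  linarith


open Metric MeasureTheory Module Finset
open scoped ENNReal

lemma exists_net (E : Type*) [NormedAddCommGroup E] [NormedSpace ℝ E]
    [FiniteDimensional ℝ E] :
    ∃ T : Finset E, (∀ y ∈ T, ‖y‖ ≤ 1) ∧ (T.card : ℝ) ≤ 13 ^ (finrank ℝ E) ∧
      ∀ x : E, ‖x‖ ≤ 1 → ∃ y ∈ T, ‖x - y‖ ≤ 6⁻¹ := by
  classical
  rcases subsingleton_or_nontrivial E with hE | hE
  · refine ⟨{0}, by simp, ?_, ?_⟩
    · simp only [Finset.card_singleton, Nat.cast_one]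
      exact one_le_pow₀ (by norm_num)
    · intro x hx
      refine ⟨0, Finset.mem_singleton_self 0, ?_⟩
      rw [Subsingleton.elim (x - 0) 0]
      simp
  letI : MeasurableSpace E := borel E
  haveI : BorelSpace E := ⟨rfl⟩
  set n := finrank ℝ E with hn
  set μ := (finBasis ℝ E).addHaar with hμ
  have hB0 : μ (ball 0 1) ≠ 0 := (measure_ball_pos μ 0 one_pos).ne'
  have hBtop : μ (ball 0 1) ≠ ⊤ := measure_ball_lt_top.ne
  -- packing bound
  have pack : ∀ S : Finset E, (∀ x ∈ S, ‖x‖ ≤ 1) →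
      ((S : Set E).Pairwise fun a b => 6⁻¹ ≤ dist a b) → (S.card : ℝ) ≤ 13 ^ n := by
    intro S hS hsep
    have hdisj : (S : Set E).PairwiseDisjoint (fun x => ball x 12⁻¹) := by
      intro a ha b hb hab
      refine ball_disjoint_ball ?_
      have := hsep ha hb hab
      linarith
    have hmeas := measure_biUnion_finset hdisj (fun x _ => measurableSet_ball)
      (μ := μ)
    have hsub : (⋃ x ∈ S, ball x 12⁻¹) ⊆ ball (0 : E) (13/12) := by
      intro z hz
      simp only [Set.mem_iUnion] at hz
      obtain ⟨x, hxS, hzx⟩ := hz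
      rw [mem_ball] at hzx ⊢
      have h1 : dist z 0 ≤ dist z x + dist x 0 := dist_triangle _ _ _
      have h2 : dist x 0 ≤ 1 := by rw [dist_zero_right]; exact hS x hxS
      linarith
    have hballs : ∀ x : E, μ (ball x 12⁻¹) =
        ENNReal.ofReal ((12⁻¹ : ℝ) ^ n) * μ (ball 0 1) := fun x =>
      Measure.addHaar_ball μ x (by norm_num)
    have hbig : μ (ball (0 : E) (13/12)) =
        ENNReal.ofReal (((13:ℝ)/12) ^ n) * μ (ball 0 1) :=
      Measure.addHaar_ball μ 0 (by norm_num)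
    have hle : (S.card : ℝ≥0∞) * (ENNReal.ofReal ((12⁻¹ : ℝ) ^ n) * μ (ball 0 1))
        ≤ ENNReal.ofReal (((13:ℝ)/12) ^ n) * μ (ball 0 1) := by
      calc (S.card : ℝ≥0∞) * (ENNReal.ofReal ((12⁻¹ : ℝ) ^ n) * μ (ball 0 1))
          = ∑ x ∈ S, μ (ball x 12⁻¹) := by
            rw [Finset.sum_congr rfl (fun x _ => hballs x), Finset.sum_const, nsmul_eq_mul]
        _ = μ (⋃ x ∈ S, ball x 12⁻¹) := hmeas.symm
        _ ≤ μ (ball (0 : E) (13/12)) := measure_mono hsub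
        _ = _ := hbig
    -- move to the reals
    have hfin : (S.card : ℝ≥0∞) * ENNReal.ofReal ((12⁻¹ : ℝ) ^ n)
        ≤ ENNReal.ofReal (((13:ℝ)/12) ^ n) := by
      rw [← mul_assoc] at hle
      exact (ENNReal.mul_le_mul_iff_left hB0 hBtop).1 hle
    have hreal : (S.card : ℝ) * (12⁻¹ : ℝ) ^ n ≤ ((13:ℝ)/12) ^ n := by
      have h' := ENNReal.toReal_mono (by simp) hfin
      rw [ENNReal.toReal_mul, ENNReal.toReal_ofReal (by positivity),
        ENNReal.toReal_ofReal (by positivity)] at h'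
      have h2 : ((S.card : ℝ≥0∞)).toReal = (S.card : ℝ) := by simp
      rwa [h2] at h'
    have hsplit : ((13:ℝ)/12) ^ n = 13 ^ n * (12⁻¹ : ℝ) ^ n := by
      rw [← mul_pow]; norm_num
    rw [hsplit] at hreal
    exact le_of_mul_le_mul_right hreal (by positivity)
  -- maximal separated set
  set 𝒞 : Set ℕ := {k | ∃ S : Finset E, (∀ x ∈ S, ‖x‖ ≤ 1) ∧
      ((S : Set E).Pairwise fun a b => 6⁻¹ ≤ dist a b) ∧ S.card = k} with h𝒞
  have hne : 𝒞.Nonempty := ⟨0, ∅, by simp, by simp, rfl⟩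
  have hbdd : BddAbove 𝒞 := by
    refine ⟨13 ^ n, fun k hk => ?_⟩
    obtain ⟨S, h1, h2, h3⟩ := hk
    have hp := pack S h1 h2
    rw [h3] at hp
    exact_mod_cast hp
  obtain ⟨S, hS1, hS2, hS3⟩ := Nat.sSup_mem hne hbdd
  refine ⟨S, hS1, ?_, ?_⟩
  · have := pack S hS1 hS2
    exact this
  · intro x hx
    by_contra hcon
    push_neg at hcon
    have hxS : x ∉ S := fun hmem => by
      have hz := hcon x hmem
      rw [sub_self, norm_zero] at hz
      norm_num at hz
    have hins : (insert x S).card = S.card + 1 := Finset.card_insert_of_notMem hxS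
    have hmem : S.card + 1 ∈ 𝒞 := by
      refine ⟨insert x S, ?_, ?_, hins⟩
      · intro y hy
        rcases Finset.mem_insert.1 hy with rfl | hy
        · exact hx
        · exact hS1 y hy
      · intro a ha b hb hab
        simp only [Finset.coe_insert, Set.mem_insert_iff] at ha hb
        rcases ha with rfl | ha
        · rcases hb with rfl | hb
          · exact absurd rfl hab
          · have := hcon b hb
            rw [dist_eq_norm]
            linarith
        · rcases hb with rfl | hb
          · have := hcon a ha
            rw [dist_comm, dist_eq_norm]
            linarith
          · exact hS2 ha hb hab
    have : S.card + 1 ≤ sSup 𝒞 := le_csSup hbdd hmem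
    rw [hS3] at this
    omega

noncomputable def Complex.abs : AbsoluteValue ℂ ℝ where
  toFun := norm
  map_mul' := norm_mul
  nonneg' := norm_nonneg
  eq_zero' _ := norm_eq_zero
  add_le' := norm_add_le

lemma Complex.norm_eq_abs (z : ℂ) : ‖z‖ = Complex.abs z := rfl

lemma Complex.abs_ofReal (r : ℝ) : Complex.abs (r : ℂ) = |r| := by
  rw [← Complex.norm_eq_abs, Complex.norm_real, Real.norm_eq_abs]

abbrev Vv (d : ℕ) := EuclideanSpace ℂ (Fin d)

noncomputable def Sfun {d : ℕ} (s : Fin d × Fin d × Fin d → ℝ) (x y z : Vv d) : ℂ :=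
  ∑ p : Fin d × Fin d × Fin d, (s p : ℂ) * (x p.1 * (y p.2.1 * z p.2.2))

section SfunLemmas

variable {d : ℕ} (s : Fin d × Fin d × Fin d → ℝ)

lemma Sfun_decomp (x y z u v w : Vv d) :
    Sfun s x y z = Sfun s (x - u) y z + Sfun s u (y - v) z + Sfun s u v (z - w)
      + Sfun s u v w := by
  simp only [Sfun, ← Finset.sum_add_distrib]
  refine Finset.sum_congr rfl fun p _ => ?_
  simp only [PiLp.sub_apply]
  ring

lemma Sfun_smul₁ (c : ℝ) (x y z : Vv d) : Sfun s (c • x) y z = c * Sfun s x y z := by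
  simp only [Sfun, Finset.mul_sum]
  refine Finset.sum_congr rfl fun p _ => ?_
  simp only [PiLp.smul_apply, Complex.real_smul]
  ring

lemma Sfun_smul₂ (c : ℝ) (x y z : Vv d) : Sfun s x (c • y) z = c * Sfun s x y z := by
  simp only [Sfun, Finset.mul_sum]
  refine Finset.sum_congr rfl fun p _ => ?_
  simp only [PiLp.smul_apply, Complex.real_smul]
  ring

lemma Sfun_smul₃ (c : ℝ) (x y z : Vv d) : Sfun s x y (c • z) = c * Sfun s x y z := by
  simp only [Sfun, Finset.mul_sum]
  refine Finset.sum_congr rfl fun p _ => ?_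
  simp only [PiLp.smul_apply, Complex.real_smul]
  ring

lemma Sfun_zero₁ (y z : Vv d) : Sfun s 0 y z = 0 := by
  simp only [Sfun, PiLp.zero_apply, zero_mul, mul_zero, Finset.sum_const_zero]

lemma Sfun_zero₂ (x z : Vv d) : Sfun s x 0 z = 0 := by
  simp only [Sfun, PiLp.zero_apply, zero_mul, mul_zero, Finset.sum_const_zero]

lemma Sfun_zero₃ (x y : Vv d) : Sfun s x y 0 = 0 := by
  simp only [Sfun, PiLp.zero_apply, zero_mul, mul_zero, Finset.sum_const_zero]

lemma coord_le_norm (x : Vv d) (i : Fin d) : Complex.abs (x i) ≤ ‖x‖ := by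
  rw [EuclideanSpace.norm_eq]
  have h1 : Complex.abs (x i) = Real.sqrt (‖x i‖ ^ 2) := by
    rw [Real.sqrt_sq (norm_nonneg _)]; rfl
  rw [h1]
  apply Real.sqrt_le_sqrt
  exact Finset.single_le_sum (f := fun j => ‖x j‖ ^ 2) (fun j _ => by positivity)
    (Finset.mem_univ i)

lemma Sfun_abs_le_of_ball (hs : ∀ p, |s p| = 1) (x y z : Vv d)
    (hx : ‖x‖ ≤ 1) (hy : ‖y‖ ≤ 1) (hz : ‖z‖ ≤ 1) :
    Complex.abs (Sfun s x y z) ≤ (d : ℝ)^3 := by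
  rw [← Complex.norm_eq_abs, Sfun]
  refine le_trans (norm_sum_le _ _) ?_
  have : ∀ p : Fin d × Fin d × Fin d,
      ‖(s p : ℂ) * (x p.1 * (y p.2.1 * z p.2.2))‖ ≤ 1 := by
    intro p
    rw [norm_mul, norm_mul, norm_mul]
    have h1 : ‖(s p : ℂ)‖ = 1 := by
      rw [Complex.norm_real, Real.norm_eq_abs, hs p]
    have h2 : ‖x p.1‖ ≤ 1 := le_trans (coord_le_norm x p.1) hx
    have h3 : ‖y p.2.1‖ ≤ 1 := le_trans (coord_le_norm y p.2.1) hy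
    have h4 : ‖z p.2.2‖ ≤ 1 := le_trans (coord_le_norm z p.2.2) hz
    have h2' : (0:ℝ) ≤ ‖x p.1‖ := norm_nonneg _
    have h3' : (0:ℝ) ≤ ‖y p.2.1‖ := norm_nonneg _
    have h4' : (0:ℝ) ≤ ‖z p.2.2‖ := norm_nonneg _
    rw [h1, one_mul]
    calc ‖x p.1‖ * (‖y p.2.1‖ * ‖z p.2.2‖) ≤ 1 * (1 * 1) :=
          mul_le_mul h2 (mul_le_mul h3 h4 h4' (by norm_num)) (by positivity) (by norm_num)
      _ = 1 := by norm_num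
  refine le_trans (Finset.sum_le_sum fun p _ => this p) ?_
  rw [Finset.sum_const, nsmul_eq_mul, mul_one]
  have : (Finset.univ : Finset (Fin d × Fin d × Fin d)).card = d^3 := by
    simp [Finset.card_univ, pow_succ]
    ring
  rw [this]
  norm_cast

end SfunLemmas

section BallBound

variable {d : ℕ} (s : Fin d × Fin d × Fin d → ℝ)

lemma Sfun_ball_of_net (hs : ∀ p, |s p| = 1) (T : Finset (Vv d))
    (hT1 : ∀ y ∈ T, ‖y‖ ≤ 1) (B : ℝ) (hB : 0 ≤ B)
    (hnet : ∀ x : Vv d, ‖x‖ ≤ 1 → ∃ y ∈ T, ‖x - y‖ ≤ 6⁻¹)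
    (hgood : ∀ u ∈ T, ∀ v ∈ T, ∀ w ∈ T, Complex.abs (Sfun s u v w) ≤ B) :
    ∀ x y z : Vv d, ‖x‖ ≤ 1 → ‖y‖ ≤ 1 → ‖z‖ ≤ 1 →
      Complex.abs (Sfun s x y z) ≤ 2 * B := by
  set Mset : Set ℝ := {r | ∃ x y z : Vv d, ‖x‖ ≤ 1 ∧ ‖y‖ ≤ 1 ∧ ‖z‖ ≤ 1 ∧
    r = Complex.abs (Sfun s x y z)} with hMset
  have hzero : (0:ℝ) ∈ Mset := ⟨0, 0, 0, by simp, by simp, by simp, by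
    rw [Sfun_zero₁]; simp⟩
  have hne : Mset.Nonempty := ⟨0, hzero⟩
  have hbdd : BddAbove Mset := by
    refine ⟨(d:ℝ)^3, fun r hr => ?_⟩
    obtain ⟨x, y, z, hx, hy, hz, rfl⟩ := hr
    exact Sfun_abs_le_of_ball s hs x y z hx hy hz
  set M := sSup Mset with hMdef
  have hM0 : 0 ≤ M := le_csSup hbdd hzero
  have hmem_le : ∀ x y z : Vv d, ‖x‖ ≤ 1 → ‖y‖ ≤ 1 → ‖z‖ ≤ 1 →
      Complex.abs (Sfun s x y z) ≤ M := fun x y z hx hy hz =>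
    le_csSup hbdd ⟨x, y, z, hx, hy, hz, rfl⟩
  have norm_hat : ∀ a : Vv d, a ≠ 0 → ‖(‖a‖⁻¹ • a : Vv d)‖ ≤ 1 := by
    intro a ha
    rw [norm_smul, norm_inv, norm_norm]
    rw [inv_mul_cancel₀ (norm_ne_zero_iff.2 ha)]
  have habs : ∀ (a : Vv d) (c : ℂ), Complex.abs ((c : ℂ) * c) ≥ 0 := by intros; positivity
  have hom1 : ∀ a y z : Vv d, ‖y‖ ≤ 1 → ‖z‖ ≤ 1 →
      Complex.abs (Sfun s a y z) ≤ ‖a‖ * M := by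
    intro a y z hy hz
    by_cases ha : a = 0
    · subst ha; rw [Sfun_zero₁]; simp
    · have h1 := hmem_le (‖a‖⁻¹ • a) y z (norm_hat a ha) hy hz
      rw [Sfun_smul₁] at h1
      rw [map_mul, Complex.abs_ofReal, abs_of_nonneg (by positivity)] at h1
      have hpos : (0:ℝ) < ‖a‖ := norm_pos_iff.2 ha
      calc Complex.abs (Sfun s a y z)
          = ‖a‖ * (‖a‖⁻¹ * Complex.abs (Sfun s a y z)) := by
            field_simp
        _ ≤ ‖a‖ * M := mul_le_mul_of_nonneg_left h1 hpos.le
  have hom2 : ∀ x b z : Vv d, ‖x‖ ≤ 1 → ‖z‖ ≤ 1 →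
      Complex.abs (Sfun s x b z) ≤ ‖b‖ * M := by
    intro x b z hx hz
    by_cases hb : b = 0
    · subst hb; rw [Sfun_zero₂]; simp
    · have h1 := hmem_le x (‖b‖⁻¹ • b) z hx (norm_hat b hb) hz
      rw [Sfun_smul₂] at h1
      rw [map_mul, Complex.abs_ofReal, abs_of_nonneg (by positivity)] at h1
      have hpos : (0:ℝ) < ‖b‖ := norm_pos_iff.2 hb
      calc Complex.abs (Sfun s x b z)
          = ‖b‖ * (‖b‖⁻¹ * Complex.abs (Sfun s x b z)) := by field_simp
        _ ≤ ‖b‖ * M := mul_le_mul_of_nonneg_left h1 hpos.le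
  have hom3 : ∀ x y c : Vv d, ‖x‖ ≤ 1 → ‖y‖ ≤ 1 →
      Complex.abs (Sfun s x y c) ≤ ‖c‖ * M := by
    intro x y c hx hy
    by_cases hc : c = 0
    · subst hc; rw [Sfun_zero₃]; simp
    · have h1 := hmem_le x y (‖c‖⁻¹ • c) hx hy (norm_hat c hc)
      rw [Sfun_smul₃] at h1
      rw [map_mul, Complex.abs_ofReal, abs_of_nonneg (by positivity)] at h1
      have hpos : (0:ℝ) < ‖c‖ := norm_pos_iff.2 hc
      calc Complex.abs (Sfun s x y c)
          = ‖c‖ * (‖c‖⁻¹ * Complex.abs (Sfun s x y c)) := by field_simp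
        _ ≤ ‖c‖ * M := mul_le_mul_of_nonneg_left h1 hpos.le
  have step : ∀ r ∈ Mset, r ≤ B + M / 2 := by
    rintro r ⟨x, y, z, hx, hy, hz, rfl⟩
    obtain ⟨u, hu, hxu⟩ := hnet x hx
    obtain ⟨v, hv, hyv⟩ := hnet y hy
    obtain ⟨w, hw, hzw⟩ := hnet z hz
    rw [Sfun_decomp s x y z u v w]
    have t1 : Complex.abs (Sfun s (x - u) y z) ≤ M / 6 := by
      have := hom1 (x - u) y z hy hz
      have h6 : ‖x - u‖ * M ≤ 6⁻¹ * M := mul_le_mul_of_nonneg_right hxu hM0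
      calc Complex.abs (Sfun s (x - u) y z) ≤ ‖x - u‖ * M := this
        _ ≤ 6⁻¹ * M := h6
        _ = M / 6 := by ring
    have t2 : Complex.abs (Sfun s u (y - v) z) ≤ M / 6 := by
      have := hom2 u (y - v) z (hT1 u hu) hz
      have h6 : ‖y - v‖ * M ≤ 6⁻¹ * M := mul_le_mul_of_nonneg_right hyv hM0
      calc Complex.abs (Sfun s u (y - v) z) ≤ ‖y - v‖ * M := this
        _ ≤ 6⁻¹ * M := h6
        _ = M / 6 := by ring
    have t3 : Complex.abs (Sfun s u v (z - w)) ≤ M / 6 := by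
      have := hom3 u v (z - w) (hT1 u hu) (hT1 v hv)
      have h6 : ‖z - w‖ * M ≤ 6⁻¹ * M := mul_le_mul_of_nonneg_right hzw hM0
      calc Complex.abs (Sfun s u v (z - w)) ≤ ‖z - w‖ * M := this
        _ ≤ 6⁻¹ * M := h6
        _ = M / 6 := by ring
    have t4 : Complex.abs (Sfun s u v w) ≤ B := hgood u hu v hv w hw
    calc Complex.abs (Sfun s (x - u) y z + Sfun s u (y - v) z + Sfun s u v (z - w)
          + Sfun s u v w)
        ≤ Complex.abs (Sfun s (x - u) y z + Sfun s u (y - v) z + Sfun s u v (z - w))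
          + Complex.abs (Sfun s u v w) := Complex.abs.add_le _ _
      _ ≤ (Complex.abs (Sfun s (x - u) y z + Sfun s u (y - v) z)
          + Complex.abs (Sfun s u v (z - w))) + Complex.abs (Sfun s u v w) := by
            have := Complex.abs.add_le (Sfun s (x - u) y z + Sfun s u (y - v) z)
              (Sfun s u v (z - w))
            linarith
      _ ≤ ((Complex.abs (Sfun s (x - u) y z) + Complex.abs (Sfun s u (y - v) z))
          + Complex.abs (Sfun s u v (z - w))) + Complex.abs (Sfun s u v w) := by
            have := Complex.abs.add_le (Sfun s (x - u) y z) (Sfun s u (y - v) z)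
            linarith
      _ ≤ B + M / 2 := by linarith
  have hfin : M ≤ B + M / 2 := csSup_le hne step
  have hM2B : M ≤ 2 * B := by linarith
  exact fun x y z hx hy hz => le_trans (hmem_le x y z hx hy hz) hM2B

lemma Sfun_homog (M : ℝ) (hM : 0 ≤ M)
    (hball : ∀ x y z : Vv d, ‖x‖ ≤ 1 → ‖y‖ ≤ 1 → ‖z‖ ≤ 1 →
      Complex.abs (Sfun s x y z) ≤ M) :
    ∀ x y z : Vv d, Complex.abs (Sfun s x y z) ≤ M * (‖x‖ * ‖y‖ * ‖z‖) := by
  intro x y z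
  by_cases hx : x = 0
  · subst hx; rw [Sfun_zero₁]; simp
  by_cases hy : y = 0
  · subst hy; rw [Sfun_zero₂]; simp
  by_cases hz : z = 0
  · subst hz; rw [Sfun_zero₃]; simp
  have hxp : (0:ℝ) < ‖x‖ := norm_pos_iff.2 hx
  have hyp : (0:ℝ) < ‖y‖ := norm_pos_iff.2 hy
  have hzp : (0:ℝ) < ‖z‖ := norm_pos_iff.2 hz
  have hnx : ‖(‖x‖⁻¹ • x : Vv d)‖ ≤ 1 := by
    rw [norm_smul, norm_inv, norm_norm, inv_mul_cancel₀ hxp.ne']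
  have hny : ‖(‖y‖⁻¹ • y : Vv d)‖ ≤ 1 := by
    rw [norm_smul, norm_inv, norm_norm, inv_mul_cancel₀ hyp.ne']
  have hnz : ‖(‖z‖⁻¹ • z : Vv d)‖ ≤ 1 := by
    rw [norm_smul, norm_inv, norm_norm, inv_mul_cancel₀ hzp.ne']
  have h1 := hball _ _ _ hnx hny hnz
  rw [Sfun_smul₁, Sfun_smul₂, Sfun_smul₃] at h1
  rw [map_mul, map_mul, map_mul, Complex.abs_ofReal, Complex.abs_ofReal,
    Complex.abs_ofReal, abs_of_nonneg (by positivity : (0:ℝ) ≤ ‖x‖⁻¹),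
    abs_of_nonneg (by positivity : (0:ℝ) ≤ ‖y‖⁻¹),
    abs_of_nonneg (by positivity : (0:ℝ) ≤ ‖z‖⁻¹)] at h1
  have key := mul_le_mul_of_nonneg_left h1
    (show (0:ℝ) ≤ ‖x‖ * ‖y‖ * ‖z‖ by positivity)
  have he : ‖x‖ * ‖y‖ * ‖z‖ * (‖x‖⁻¹ * (‖y‖⁻¹ * (‖z‖⁻¹ * Complex.abs (Sfun s x y z))))
      = Complex.abs (Sfun s x y z) := by
    field_simp
  rw [he] at key
  calc Complex.abs (Sfun s x y z) ≤ ‖x‖ * ‖y‖ * ‖z‖ * M := key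
    _ = M * (‖x‖ * ‖y‖ * ‖z‖) := by ring

end BallBound

lemma norm_sq_sum (d : ℕ) (u : Vv d) : ∑ i, Complex.abs (u i) ^ 2 = ‖u‖ ^ 2 := by
  rw [EuclideanSpace.norm_eq, Real.sq_sqrt (by positivity)]
  rfl

lemma triple_sq_sum (d : ℕ) (u v w : Vv d) (hu : ‖u‖ ≤ 1) (hv : ‖v‖ ≤ 1) (hw : ‖w‖ ≤ 1) :
    ∑ p : Fin d × Fin d × Fin d,
      Complex.abs (u p.1 * (v p.2.1 * w p.2.2)) ^ 2 ≤ 1 := by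
  have key : ∑ p : Fin d × Fin d × Fin d, Complex.abs (u p.1 * (v p.2.1 * w p.2.2)) ^ 2
      = (∑ i, Complex.abs (u i) ^ 2) *
        ((∑ j, Complex.abs (v j) ^ 2) * (∑ k, Complex.abs (w k) ^ 2)) := by
    rw [Fintype.sum_prod_type]
    simp_rw [Fintype.sum_prod_type, map_mul, mul_pow]
    simp_rw [← Finset.mul_sum, ← Finset.sum_mul]
  rw [key]
  have h1 : ∑ i, Complex.abs (u i) ^ 2 ≤ 1 := by
    rw [norm_sq_sum]; nlinarith [norm_nonneg u]
  have h2 : ∑ j, Complex.abs (v j) ^ 2 ≤ 1 := by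
    rw [norm_sq_sum]; nlinarith [norm_nonneg v]
  have h3 : ∑ k, Complex.abs (w k) ^ 2 ≤ 1 := by
    rw [norm_sq_sum]; nlinarith [norm_nonneg w]
  have p2 : (0:ℝ) ≤ ∑ j, Complex.abs (v j) ^ 2 := by positivity
  have p3 : (0:ℝ) ≤ ∑ k, Complex.abs (w k) ^ 2 := by positivity
  calc (∑ i, Complex.abs (u i) ^ 2) *
        ((∑ j, Complex.abs (v j) ^ 2) * (∑ k, Complex.abs (w k) ^ 2))
      ≤ 1 * (1 * 1) := mul_le_mul h1 (mul_le_mul h2 h3 p3 (by norm_num))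
        (by positivity) (by norm_num)
    _ = 1 := by norm_num

lemma numeric_bound {d : ℕ} (hd : 1 ≤ d) : 4 * (13:ℝ) ^ (6 * d) < Real.exp (18 * d) := by
  have h0 : (4:ℝ) * 13 ^ 6 < Real.exp 18 := by
    have he : Real.exp 18 = Real.exp 1 ^ (18 : ℕ) := by
      rw [← Real.exp_nat_mul]; norm_num
    have h1 : (2.7:ℝ) ^ (18:ℕ) ≤ Real.exp 1 ^ (18:ℕ) := by
      apply pow_le_pow_left₀ (by norm_num)
      linarith [Real.exp_one_gt_d9]
    have h2 : (4:ℝ) * 13 ^ 6 < (2.7:ℝ) ^ (18:ℕ) := by norm_num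
    rw [he]; linarith
  have h1 : (4:ℝ) * 13 ^ (6 * d) ≤ (4 * 13 ^ 6) ^ d := by
    rw [mul_pow, pow_mul]
    have h4 : (4:ℝ) ≤ 4 ^ d := le_self_pow₀ (by norm_num) (by omega)
    have : (0:ℝ) ≤ ((13:ℝ)^6) ^ d := by positivity
    nlinarith
  have h2 : ((4:ℝ) * 13 ^ 6) ^ d < (Real.exp 18) ^ d := by
    apply pow_lt_pow_left₀ h0 (by positivity) (by omega)
  have h3 : (Real.exp 18) ^ d = Real.exp (18 * d) := by
    rw [mul_comm, Real.exp_nat_mul]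
  linarith

set_option maxHeartbeats 2000000 in
lemma good_sign (d : ℕ) : ∃ s : Fin d × Fin d × Fin d → ℝ, (∀ p, |s p| = 1) ∧
    ∀ x y z : Vv d, Complex.abs (Sfun s x y z)
      ≤ 24 * Real.sqrt d * (‖x‖ * ‖y‖ * ‖z‖) := by
  classical
  rcases Nat.eq_zero_or_pos d with hd | hd
  · subst hd
    refine ⟨fun _ => 1, fun p => by norm_num, fun x y z => ?_⟩
    have : Sfun (fun _ => (1:ℝ)) x y z = 0 := by simp [Sfun]
    rw [this]
    simp
  -- d ≥ 1
  obtain ⟨T, hT1, hT2, hT3⟩ := exists_net (Vv d)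
  have hfr : Module.finrank ℝ (Vv d) = 2 * d := by
    rw [← Module.finrank_mul_finrank ℝ ℂ (Vv d), Complex.finrank_real_complex,
      finrank_euclideanSpace_fin]
  rw [hfr] at hT2
  set t : ℝ := 6 * Real.sqrt d with ht_def
  have ht0 : 0 ≤ t := by positivity
  set N := Fintype.card (Fin d × Fin d × Fin d) with hN
  set E := Real.exp (-(t ^ 2 / 2)) with hE
  -- bad sets
  set cRe : Vv d × Vv d × Vv d → (Fin d × Fin d × Fin d) → ℝ :=
    fun q p => (q.1 p.1 * (q.2.1 p.2.1 * q.2.2 p.2.2)).re with hcRe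
  set cIm : Vv d × Vv d × Vv d → (Fin d × Fin d × Fin d) → ℝ :=
    fun q p => (q.1 p.1 * (q.2.1 p.2.1 * q.2.2 p.2.2)).im with hcIm
  set badRe : Vv d × Vv d × Vv d → Finset ((Fin d × Fin d × Fin d) → Bool) :=
    fun q => (Finset.univ.filter
      (fun σ => t ≤ |∑ p, (if σ p then cRe q p else -(cRe q p))|)) with hbadRe
  set badIm : Vv d × Vv d × Vv d → Finset ((Fin d × Fin d × Fin d) → Bool) :=
    fun q => (Finset.univ.filter
      (fun σ => t ≤ |∑ p, (if σ p then cIm q p else -(cIm q p))|)) with hbadIm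
  set bigbad := (T ×ˢ (T ×ˢ T)).biUnion (fun q => badRe q ∪ badIm q) with hbigbad
  -- cardinality of each bad set
  have hsq : ∀ q ∈ T ×ˢ (T ×ˢ T), (∑ p, cRe q p ^ 2 ≤ 1) ∧ (∑ p, cIm q p ^ 2 ≤ 1) := by
    rintro ⟨u, v, w⟩ hq
    rw [Finset.mem_product] at hq
    obtain ⟨hu, hq2⟩ := hq
    rw [Finset.mem_product] at hq2
    obtain ⟨hv, hw⟩ := hq2
    have htr := triple_sq_sum d u v w (hT1 u hu) (hT1 v hv) (hT1 w hw)
    constructor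
    · refine le_trans (Finset.sum_le_sum fun p _ => ?_) htr
      have h1 : |(u p.1 * (v p.2.1 * w p.2.2)).re| ≤
          Complex.abs (u p.1 * (v p.2.1 * w p.2.2)) := Complex.abs_re_le_norm _
      calc cRe (u, v, w) p ^ 2 = |(u p.1 * (v p.2.1 * w p.2.2)).re| ^ 2 := by
            rw [sq_abs]
        _ ≤ Complex.abs (u p.1 * (v p.2.1 * w p.2.2)) ^ 2 := by
            apply pow_le_pow_left₀ (abs_nonneg _) h1
    · refine le_trans (Finset.sum_le_sum fun p _ => ?_) htr
      have h1 : |(u p.1 * (v p.2.1 * w p.2.2)).im| ≤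
          Complex.abs (u p.1 * (v p.2.1 * w p.2.2)) := Complex.abs_im_le_norm _
      calc cIm (u, v, w) p ^ 2 = |(u p.1 * (v p.2.1 * w p.2.2)).im| ^ 2 := by
            rw [sq_abs]
        _ ≤ Complex.abs (u p.1 * (v p.2.1 * w p.2.2)) ^ 2 := by
            apply pow_le_pow_left₀ (abs_nonneg _) h1
  have hbadcard : ∀ q ∈ T ×ˢ (T ×ˢ T),
      (((badRe q ∪ badIm q).card : ℝ)) ≤ 4 * ((2:ℝ) ^ N * E) := by
    intro q hq
    have h1 := chernoff_abs (cRe q) (hsq q hq).1 t ht0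
    have h2 := chernoff_abs (cIm q) (hsq q hq).2 t ht0
    have hcu : ((badRe q ∪ badIm q).card : ℝ) ≤ ((badRe q).card : ℝ) + ((badIm q).card : ℝ) := by
      exact_mod_cast Finset.card_union_le _ _
    calc ((badRe q ∪ badIm q).card : ℝ) ≤ _ := hcu
      _ ≤ 2 * ((2:ℝ) ^ N * E) + 2 * ((2:ℝ) ^ N * E) := by
          exact add_le_add h1 h2
      _ = 4 * ((2:ℝ) ^ N * E) := by ring
  have hbigcard : (bigbad.card : ℝ) < (2:ℝ) ^ N := by
    have hc1 : (bigbad.card : ℝ) ≤ ∑ q ∈ T ×ˢ (T ×ˢ T), (((badRe q ∪ badIm q).card : ℝ)) := by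
      have := Finset.card_biUnion_le (s := T ×ˢ (T ×ˢ T)) (t := fun q => badRe q ∪ badIm q)
      exact_mod_cast this
    have hc2 : ∑ q ∈ T ×ˢ (T ×ˢ T), (((badRe q ∪ badIm q).card : ℝ))
        ≤ ∑ _q ∈ T ×ˢ (T ×ˢ T), 4 * ((2:ℝ) ^ N * E) :=
      Finset.sum_le_sum hbadcard
    have hc3 : ∑ _q ∈ T ×ˢ (T ×ˢ T), 4 * ((2:ℝ) ^ N * E)
        = ((T ×ˢ (T ×ˢ T)).card : ℝ) * (4 * ((2:ℝ) ^ N * E)) := by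
      rw [Finset.sum_const, nsmul_eq_mul]
    have hcardT : ((T ×ˢ (T ×ˢ T)).card : ℝ) ≤ (13:ℝ) ^ (6 * d) := by
      rw [Finset.card_product, Finset.card_product]
      push_cast
      have h13 : ((13:ℝ) ^ (2*d)) * ((13:ℝ) ^ (2*d) * (13:ℝ) ^ (2*d)) = 13 ^ (6 * d) := by
        rw [← pow_add, ← pow_add]
        congr 1
        ring
      have hT2' : (0:ℝ) ≤ (T.card : ℝ) := by positivity
      calc (T.card : ℝ) * ((T.card : ℝ) * (T.card : ℝ))
          ≤ ((13:ℝ) ^ (2*d)) * ((13:ℝ) ^ (2*d) * (13:ℝ) ^ (2*d)) := by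
            apply mul_le_mul hT2 _ (by positivity) (by positivity)
            apply mul_le_mul hT2 hT2 hT2' (by positivity)
        _ = 13 ^ (6 * d) := h13
    have hEpos : 0 < E := Real.exp_pos _
    have h2N : (0:ℝ) < (2:ℝ) ^ N := by positivity
    have hEval : E = Real.exp (-(18 * d)) := by
      rw [hE, ht_def]
      congr 1
      rw [mul_pow, Real.sq_sqrt (by positivity : (0:ℝ) ≤ (d:ℝ))]
      ring
    have hnum := numeric_bound hd
    have hkey : (13:ℝ) ^ (6 * d) * (4 * ((2:ℝ) ^ N * E)) < (2:ℝ) ^ N := by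
      rw [hEval]
      have hx : Real.exp (18 * (d:ℝ)) * Real.exp (-(18 * (d:ℝ))) = 1 := by
        rw [← Real.exp_add]; simp
      have hlt1 : 4 * (13:ℝ) ^ (6 * d) * Real.exp (-(18 * (d:ℝ))) < 1 := by
        calc 4 * (13:ℝ) ^ (6 * d) * Real.exp (-(18 * (d:ℝ)))
            < Real.exp (18 * (d:ℝ)) * Real.exp (-(18 * (d:ℝ))) :=
              mul_lt_mul_of_pos_right hnum (Real.exp_pos _)
          _ = 1 := hx
      calc (13:ℝ) ^ (6 * d) * (4 * ((2:ℝ) ^ N * Real.exp (-(18 * (d:ℝ)))))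
          = (4 * (13:ℝ) ^ (6 * d) * Real.exp (-(18 * (d:ℝ)))) * (2:ℝ) ^ N := by ring
        _ < 1 * (2:ℝ) ^ N := mul_lt_mul_of_pos_right hlt1 h2N
        _ = (2:ℝ) ^ N := one_mul _
    calc (bigbad.card : ℝ) ≤ _ := hc1
      _ ≤ _ := hc2
      _ = _ := hc3
      _ ≤ (13:ℝ) ^ (6 * d) * (4 * ((2:ℝ) ^ N * E)) := by
          apply mul_le_mul_of_nonneg_right hcardT (by positivity)
      _ < (2:ℝ) ^ N := hkey
  -- extract a good sign pattern
  have hcard_univ : (Finset.univ : Finset ((Fin d × Fin d × Fin d) → Bool)).card = 2 ^ N := by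
    rw [Finset.card_univ, Fintype.card_fun]
    simp [hN]
  have hlt : bigbad.card < (Finset.univ : Finset ((Fin d × Fin d × Fin d) → Bool)).card := by
    rw [hcard_univ]
    exact_mod_cast lt_of_le_of_lt (le_refl _) (by exact_mod_cast hbigcard)
  have hnonempty : (Finset.univ \ bigbad).Nonempty := by
    rw [← Finset.card_pos, Finset.card_sdiff_of_subset (Finset.subset_univ _)]
    omega
  obtain ⟨σ, hσ⟩ := hnonempty
  have hσnot : σ ∉ bigbad := (Finset.mem_sdiff.1 hσ).2
  set s : Fin d × Fin d × Fin d → ℝ := fun p => if σ p then 1 else -1 with hs_def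
  have hs1 : ∀ p, |s p| = 1 := by
    intro p; by_cases h : σ p <;> simp [hs_def, h]
  -- Re and Im of Sfun
  have hre : ∀ u v w : Vv d, (Sfun s u v w).re
      = ∑ p, (if σ p then cRe (u,v,w) p else -(cRe (u,v,w) p)) := by
    intro u v w
    rw [Sfun, Complex.re_sum]
    refine Finset.sum_congr rfl fun p _ => ?_
    by_cases h : σ p <;> simp [hs_def, h, hcRe]
  have him : ∀ u v w : Vv d, (Sfun s u v w).im
      = ∑ p, (if σ p then cIm (u,v,w) p else -(cIm (u,v,w) p)) := by
    intro u v w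
    rw [Sfun, Complex.im_sum]
    refine Finset.sum_congr rfl fun p _ => ?_
    by_cases h : σ p <;> simp [hs_def, h, hcIm]
  have hgood : ∀ u ∈ T, ∀ v ∈ T, ∀ w ∈ T,
      Complex.abs (Sfun s u v w) ≤ 12 * Real.sqrt d := by
    intro u hu v hv w hw
    have hqmem : (u, v, w) ∈ T ×ˢ (T ×ˢ T) := by
      rw [Finset.mem_product]
      exact ⟨hu, by rw [Finset.mem_product]; exact ⟨hv, hw⟩⟩
    have hnb : σ ∉ badRe (u,v,w) ∪ badIm (u,v,w) := by
      intro hmem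
      exact hσnot (Finset.mem_biUnion.2 ⟨(u,v,w), hqmem, hmem⟩)
    rw [Finset.mem_union] at hnb
    push_neg at hnb
    obtain ⟨hnbRe, hnbIm⟩ := hnb
    have h1 : ¬ (t ≤ |∑ p, (if σ p then cRe (u,v,w) p else -(cRe (u,v,w) p))|) := by
      intro hcon
      exact hnbRe (Finset.mem_filter.2 ⟨Finset.mem_univ _, hcon⟩)
    have h2 : ¬ (t ≤ |∑ p, (if σ p then cIm (u,v,w) p else -(cIm (u,v,w) p))|) := by
      intro hcon
      exact hnbIm (Finset.mem_filter.2 ⟨Finset.mem_univ _, hcon⟩)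
    push_neg at h1 h2
    have habs := Complex.norm_le_abs_re_add_abs_im (Sfun s u v w)
    rw [hre u v w, him u v w] at habs
    have : Complex.abs (Sfun s u v w) < t + t := by
      apply lt_of_le_of_lt habs
      exact add_lt_add h1 h2
    rw [ht_def] at this
    linarith
  have hball := Sfun_ball_of_net s hs1 T hT1 (12 * Real.sqrt d) (by positivity) hT3 hgood
  refine ⟨s, hs1, ?_⟩
  have := Sfun_homog s (2 * (12 * Real.sqrt d)) (by positivity) hball
  intro x y z
  have h24 : 2 * (12 * Real.sqrt d) = 24 * Real.sqrt d := by ring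
  rw [h24] at this
  exact this x y z

-- ======== auxiliary tensor-side material ========


section Aux

variable {d}

/-- coordinate functional on `V d`. -/
def coordL (i : Fin d) : V d →ₗ[ℂ] ℂ where
  toFun x := x i
  map_add' x y := rfl
  map_smul' c x := rfl

@[simp] lemma coordL_apply (i : Fin d) (x : V d) : coordL i x = x i := rfl

/-- the trilinear form with coefficients `c`. -/
noncomputable def triL (c : Fin d × Fin d × Fin d → ℂ) :
    V d →ₗ[ℂ] V d →ₗ[ℂ] V d →ₗ[ℂ] ℂ :=
  ∑ p : Fin d × Fin d × Fin d,
    c p • (coordL p.1).smulRight ((coordL p.2.1).smulRight (coordL p.2.2))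

lemma triL_apply (c : Fin d × Fin d × Fin d → ℂ) (x y z : V d) :
    triL c x y z = ∑ p : Fin d × Fin d × Fin d,
      c p * (x p.1 * (y p.2.1 * z p.2.2)) := by
  rw [triL, LinearMap.sum_apply]
  rw [LinearMap.coe_sum, Finset.sum_apply]
  rw [LinearMap.coe_sum, Finset.sum_apply]
  refine Finset.sum_congr rfl fun p _ => ?_
  simp [LinearMap.smul_apply, LinearMap.smulRight_apply, smul_eq_mul]

end Aux

section Aux2

variable {d}

/-- `F3 c` : linear functional on the triple tensor product extending `triL c`. -/
noncomputable def F3 (c : Fin d × Fin d × Fin d → ℂ) :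
    (V d ⊗[ℂ] (V d ⊗[ℂ] V d)) →ₗ[ℂ] ℂ :=
  TensorProduct.lift ((TensorProduct.uncurry (RingHom.id ℂ) (V d) (V d) ℂ).comp (triL c))

@[simp] lemma F3_tmul (c : Fin d × Fin d × Fin d → ℂ) (x y z : V d) :
    F3 c (x ⊗ₜ[ℂ] (y ⊗ₜ[ℂ] z)) = triL c x y z := by
  simp [F3, TensorProduct.lift.tmul, TensorProduct.uncurry_apply]

/-- `Phi c` : the product functional on the 6-fold tensor product. -/
noncomputable def Phi (c : Fin d × Fin d × Fin d → ℂ) :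
    ((V d ⊗[ℂ] (V d ⊗[ℂ] V d)) ⊗[ℂ] (V d ⊗[ℂ] (V d ⊗[ℂ] V d))) →ₗ[ℂ] ℂ :=
  TensorProduct.lift ((LinearMap.mul ℂ ℂ).compl₁₂ (F3 c) (F3 c))

@[simp] lemma Phi_tmul (c : Fin d × Fin d × Fin d → ℂ)
    (a b : V d ⊗[ℂ] (V d ⊗[ℂ] V d)) :
    Phi c (a ⊗ₜ[ℂ] b) = F3 c a * F3 c b := by
  simp [Phi, TensorProduct.lift.tmul, LinearMap.compl₁₂_apply, LinearMap.mul_apply']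

end Aux2

lemma iota_apply (v : E3 d) :
    iota d v = ∑ p : Fin d × Fin d × Fin d,
      v p • (EuclideanSpace.single p.1 (1:ℂ) ⊗ₜ[ℂ]
        (EuclideanSpace.single p.2.1 (1:ℂ) ⊗ₜ[ℂ] EuclideanSpace.single p.2.2 (1:ℂ))) := by
  rw [iota, Basis.constr_apply_fintype]
  refine Finset.sum_congr rfl fun p _ => ?_
  rfl

lemma triL_single (c : Fin d × Fin d × Fin d → ℂ) (p : Fin d × Fin d × Fin d) :
    triL c (EuclideanSpace.single p.1 (1:ℂ)) (EuclideanSpace.single p.2.1 (1:ℂ))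
      (EuclideanSpace.single p.2.2 (1:ℂ)) = c p := by
  rw [triL_apply]
  rw [Finset.sum_eq_single_of_mem p (Finset.mem_univ _)]
  · simp [EuclideanSpace.single_apply]
  · intro q _ hq
    have : q.1 ≠ p.1 ∨ q.2.1 ≠ p.2.1 ∨ q.2.2 ≠ p.2.2 := by
      by_contra hcon
      push_neg at hcon
      exact hq (Prod.ext hcon.1 (Prod.ext hcon.2.1 hcon.2.2))
    rcases this with h | h | h <;>
      simp [EuclideanSpace.single_apply, h]

lemma F3_iota (c : Fin d × Fin d × Fin d → ℂ) (v : E3 d) :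
    F3 c (iota d v) = ∑ p : Fin d × Fin d × Fin d, v p * c p := by
  rw [iota_apply, map_sum]
  refine Finset.sum_congr rfl fun p _ => ?_
  rw [_root_.map_smul, F3_tmul, triL_single, smul_eq_mul]

lemma card_P (d : ℕ) :
    ((Finset.univ : Finset (Fin d × Fin d × Fin d)).card : ℝ) = (d:ℝ)^3 := by
  rw [Finset.card_univ]
  simp [Fintype.card_prod]
  push_cast
  ring

lemma l1_le_sqrt_card (d : ℕ) (v : E3 d) :
    ∑ p, ‖v p‖ ≤ Real.sqrt ((d:ℝ)^3) * ‖v‖ := by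
  have h1 : (∑ p, ‖v p‖)^2 ≤
      ((Finset.univ : Finset (Fin d × Fin d × Fin d)).card : ℝ) * ∑ p, ‖v p‖^2 :=
    sq_sum_le_card_mul_sum_sq
  rw [card_P] at h1
  have hnorm : ∑ p, ‖v p‖^2 = ‖v‖^2 := by
    rw [EuclideanSpace.norm_eq, Real.sq_sqrt (by positivity)]
  rw [hnorm] at h1
  have h2 : ∑ p, ‖v p‖ ≤ Real.sqrt ((d:ℝ)^3 * ‖v‖^2) := by
    rw [show (d:ℝ)^3 * ‖v‖^2 = ((d:ℝ)^3 * ‖v‖^2) from rfl]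
    have := Real.sqrt_le_sqrt (le_of_eq rfl : (∑ p, ‖v p‖)^2 ≤ (∑ p, ‖v p‖)^2)
    calc ∑ p, ‖v p‖ = Real.sqrt ((∑ p, ‖v p‖)^2) := by
          rw [Real.sqrt_sq (by positivity)]
      _ ≤ Real.sqrt ((d:ℝ)^3 * ‖v‖^2) := Real.sqrt_le_sqrt h1
  calc ∑ p, ‖v p‖ ≤ Real.sqrt ((d:ℝ)^3 * ‖v‖^2) := h2
    _ = Real.sqrt ((d:ℝ)^3) * ‖v‖ := by
        rw [Real.sqrt_mul (by positivity), Real.sqrt_sq (norm_nonneg _)]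

lemma projNorm6_set_nonneg (d : ℕ)
    (u : (V d ⊗[ℂ] (V d ⊗[ℂ] V d)) ⊗[ℂ] (V d ⊗[ℂ] (V d ⊗[ℂ] V d))) :
    ∀ r ∈ {r : ℝ | ∃ (m : ℕ) (x₁ x₂ x₃ x₄ x₅ x₆ : Fin m → V d),
      u = ∑ i, (x₁ i ⊗ₜ[ℂ] (x₂ i ⊗ₜ[ℂ] x₃ i)) ⊗ₜ[ℂ] (x₄ i ⊗ₜ[ℂ] (x₅ i ⊗ₜ[ℂ] x₆ i)) ∧
      r = ∑ i, ‖x₁ i‖ * ‖x₂ i‖ * ‖x₃ i‖ * ‖x₄ i‖ * ‖x₅ i‖ * ‖x₆ i‖}, 0 ≤ r := by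
  rintro r ⟨m, x₁, x₂, x₃, x₄, x₅, x₆, _, rfl⟩
  apply Finset.sum_nonneg
  intro i _
  positivity

set_option maxHeartbeats 2000000 in
/-- The canonical representation of `map ι ι (∑ f i ⊗ g i)` as a sum of
elementary six-tensors, giving an upper bound for `projNorm6`. -/
lemma rep6_mem {d : ℕ} (m : ℕ) (f g : Fin m → E3 d) :
    (∑ i, (∑ p, ‖f i p‖) * (∑ q, ‖g i q‖)) ∈
      {r : ℝ | ∃ (m' : ℕ) (x₁ x₂ x₃ x₄ x₅ x₆ : Fin m' → V d),
        TensorProduct.map (iota d) (iota d) (∑ i, f i ⊗ₜ[ℂ] g i)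
          = ∑ i, (x₁ i ⊗ₜ[ℂ] (x₂ i ⊗ₜ[ℂ] x₃ i)) ⊗ₜ[ℂ] (x₄ i ⊗ₜ[ℂ] (x₅ i ⊗ₜ[ℂ] x₆ i)) ∧
        r = ∑ i, ‖x₁ i‖ * ‖x₂ i‖ * ‖x₃ i‖ * ‖x₄ i‖ * ‖x₅ i‖ * ‖x₆ i‖} := by
  classical
  set Q := (Fin d × Fin d × Fin d) with hQ
  set ι := Fin m × (Q × Q) with hι
  set e : ι ≃ Fin (Fintype.card ι) := Fintype.equivFin ι with he
  set sgl : Q → V d ⊗[ℂ] (V d ⊗[ℂ] V d) := fun p =>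
    EuclideanSpace.single p.1 (1:ℂ) ⊗ₜ[ℂ]
      (EuclideanSpace.single p.2.1 (1:ℂ) ⊗ₜ[ℂ] EuclideanSpace.single p.2.2 (1:ℂ)) with hsgl
  set x₁ : Fin (Fintype.card ι) → V d := fun j =>
    f (e.symm j).1 (e.symm j).2.1 • EuclideanSpace.single (e.symm j).2.1.1 (1:ℂ) with hx₁
  set x₂ : Fin (Fintype.card ι) → V d := fun j =>
    EuclideanSpace.single (e.symm j).2.1.2.1 (1:ℂ) with hx₂
  set x₃ : Fin (Fintype.card ι) → V d := fun j =>
    EuclideanSpace.single (e.symm j).2.1.2.2 (1:ℂ) with hx₃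
  set x₄ : Fin (Fintype.card ι) → V d := fun j =>
    g (e.symm j).1 (e.symm j).2.2 • EuclideanSpace.single (e.symm j).2.2.1 (1:ℂ) with hx₄
  set x₅ : Fin (Fintype.card ι) → V d := fun j =>
    EuclideanSpace.single (e.symm j).2.2.2.1 (1:ℂ) with hx₅
  set x₆ : Fin (Fintype.card ι) → V d := fun j =>
    EuclideanSpace.single (e.symm j).2.2.2.2 (1:ℂ) with hx₆
  have hterm : ∀ j : Fin (Fintype.card ι),
      (x₁ j ⊗ₜ[ℂ] (x₂ j ⊗ₜ[ℂ] x₃ j)) ⊗ₜ[ℂ] (x₄ j ⊗ₜ[ℂ] (x₅ j ⊗ₜ[ℂ] x₆ j))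
      = (f (e.symm j).1 ((e.symm j).2.1) • sgl (e.symm j).2.1) ⊗ₜ[ℂ]
        (g (e.symm j).1 ((e.symm j).2.2) • sgl (e.symm j).2.2) := by
    intro j
    rw [hx₁, hx₄, hsgl]
    rw [TensorProduct.smul_tmul', TensorProduct.smul_tmul']
  have hexp : TensorProduct.map (iota d) (iota d) (∑ i, f i ⊗ₜ[ℂ] g i)
      = ∑ j, (x₁ j ⊗ₜ[ℂ] (x₂ j ⊗ₜ[ℂ] x₃ j)) ⊗ₜ[ℂ] (x₄ j ⊗ₜ[ℂ] (x₅ j ⊗ₜ[ℂ] x₆ j)) := by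
    rw [map_sum]
    have hj : ∑ j, (x₁ j ⊗ₜ[ℂ] (x₂ j ⊗ₜ[ℂ] x₃ j)) ⊗ₜ[ℂ] (x₄ j ⊗ₜ[ℂ] (x₅ j ⊗ₜ[ℂ] x₆ j))
        = ∑ a : ι, (f a.1 a.2.1 • sgl a.2.1) ⊗ₜ[ℂ] (g a.1 a.2.2 • sgl a.2.2) := by
      refine Fintype.sum_equiv e.symm _ _ fun j => ?_
      rw [hterm j]
    rw [hj, Fintype.sum_prod_type]
    refine Finset.sum_congr rfl fun i _ => ?_
    rw [TensorProduct.map_tmul, iota_apply, iota_apply]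
    rw [TensorProduct.sum_tmul]
    conv_rhs => rw [Fintype.sum_prod_type]
    refine Finset.sum_congr rfl fun p _ => ?_
    rw [TensorProduct.tmul_sum]
  have hone : ‖(1:ℂ)‖ = 1 := by simp
  have hn1 : ∀ j, ‖x₁ j‖ = ‖f (e.symm j).1 (e.symm j).2.1‖ := fun j => by
    rw [hx₁, norm_smul, EuclideanSpace.norm_single, hone, mul_one]
  have hn4 : ∀ j, ‖x₄ j‖ = ‖g (e.symm j).1 (e.symm j).2.2‖ := fun j => by
    rw [hx₄, norm_smul, EuclideanSpace.norm_single, hone, mul_one]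
  have hn2 : ∀ j, ‖x₂ j‖ = 1 := fun j => by rw [hx₂, EuclideanSpace.norm_single, hone]
  have hn3 : ∀ j, ‖x₃ j‖ = 1 := fun j => by rw [hx₃, EuclideanSpace.norm_single, hone]
  have hn5 : ∀ j, ‖x₅ j‖ = 1 := fun j => by rw [hx₅, EuclideanSpace.norm_single, hone]
  have hn6 : ∀ j, ‖x₆ j‖ = 1 := fun j => by rw [hx₆, EuclideanSpace.norm_single, hone]
  have hval : ∑ j, ‖x₁ j‖ * ‖x₂ j‖ * ‖x₃ j‖ * ‖x₄ j‖ * ‖x₅ j‖ * ‖x₆ j‖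
      = ∑ i, (∑ p, ‖f i p‖) * (∑ q, ‖g i q‖) := by
    calc ∑ j, ‖x₁ j‖ * ‖x₂ j‖ * ‖x₃ j‖ * ‖x₄ j‖ * ‖x₅ j‖ * ‖x₆ j‖
        = ∑ j, ‖f (e.symm j).1 (e.symm j).2.1‖ * ‖g (e.symm j).1 (e.symm j).2.2‖ := by
          refine Finset.sum_congr rfl fun j _ => ?_
          rw [hn1 j, hn2 j, hn3 j, hn4 j, hn5 j, hn6 j]
          ring
      _ = ∑ a : ι, ‖f a.1 a.2.1‖ * ‖g a.1 a.2.2‖ :=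
            Fintype.sum_equiv e.symm _ _ fun j => rfl
      _ = ∑ i, (∑ p, ‖f i p‖) * (∑ q, ‖g i q‖) := by
          rw [Fintype.sum_prod_type]
          refine Finset.sum_congr rfl fun i _ => ?_
          rw [Finset.sum_mul_sum]
          rw [Fintype.sum_prod_type]
  exact ⟨Fintype.card ι, x₁, x₂, x₃, x₄, x₅, x₆, hexp, hval.symm⟩

lemma projNorm6_rep_le {d : ℕ} (m : ℕ) (f g : Fin m → E3 d) :
    projNorm6 d (TensorProduct.map (iota d) (iota d) (∑ i, f i ⊗ₜ[ℂ] g i))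
      ≤ ∑ i, (∑ p, ‖f i p‖) * (∑ q, ‖g i q‖) :=
  csInf_le ⟨0, fun r hr => projNorm6_set_nonneg d _ r hr⟩ (rep6_mem m f g)

lemma projNorm6_lower {d : ℕ} (c : Fin d × Fin d × Fin d → ℂ) (K : ℝ)
    (hb : ∀ x y z : V d, Complex.abs (triL c x y z) ≤ K * (‖x‖ * ‖y‖ * ‖z‖))
    (u : (V d ⊗[ℂ] (V d ⊗[ℂ] V d)) ⊗[ℂ] (V d ⊗[ℂ] (V d ⊗[ℂ] V d))) :
    ∀ r ∈ {r : ℝ | ∃ (m : ℕ) (x₁ x₂ x₃ x₄ x₅ x₆ : Fin m → V d),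
      u = ∑ i, (x₁ i ⊗ₜ[ℂ] (x₂ i ⊗ₜ[ℂ] x₃ i)) ⊗ₜ[ℂ] (x₄ i ⊗ₜ[ℂ] (x₅ i ⊗ₜ[ℂ] x₆ i)) ∧
      r = ∑ i, ‖x₁ i‖ * ‖x₂ i‖ * ‖x₃ i‖ * ‖x₄ i‖ * ‖x₅ i‖ * ‖x₆ i‖},
      Complex.abs (Phi c u) ≤ K^2 * r := by
  rintro r ⟨m, x₁, x₂, x₃, x₄, x₅, x₆, hu, rfl⟩
  rw [hu, map_sum]
  have habs : Complex.abs (∑ i, Phi c ((x₁ i ⊗ₜ[ℂ] (x₂ i ⊗ₜ[ℂ] x₃ i)) ⊗ₜ[ℂ]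
      (x₄ i ⊗ₜ[ℂ] (x₅ i ⊗ₜ[ℂ] x₆ i))))
      ≤ ∑ i, Complex.abs (Phi c ((x₁ i ⊗ₜ[ℂ] (x₂ i ⊗ₜ[ℂ] x₃ i)) ⊗ₜ[ℂ]
      (x₄ i ⊗ₜ[ℂ] (x₅ i ⊗ₜ[ℂ] x₆ i)))) := Complex.abs.sum_le _ _
  refine le_trans habs ?_
  rw [Finset.mul_sum]
  refine Finset.sum_le_sum fun i _ => ?_
  rw [Phi_tmul, F3_tmul, F3_tmul, map_mul]
  have h1 := hb (x₁ i) (x₂ i) (x₃ i)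
  have h2 := hb (x₄ i) (x₅ i) (x₆ i)
  have h1' : (0:ℝ) ≤ Complex.abs (triL c (x₁ i) (x₂ i) (x₃ i)) := AbsoluteValue.nonneg _ _
  have h2' : (0:ℝ) ≤ Complex.abs (triL c (x₄ i) (x₅ i) (x₆ i)) := AbsoluteValue.nonneg _ _
  have hK1 : (0:ℝ) ≤ K * (‖x₁ i‖ * ‖x₂ i‖ * ‖x₃ i‖) := le_trans h1' h1
  calc Complex.abs (triL c (x₁ i) (x₂ i) (x₃ i)) * Complex.abs (triL c (x₄ i) (x₅ i) (x₆ i))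
      ≤ (K * (‖x₁ i‖ * ‖x₂ i‖ * ‖x₃ i‖)) * (K * (‖x₄ i‖ * ‖x₅ i‖ * ‖x₆ i‖)) :=
        mul_le_mul h1 h2 h2' hK1
    _ = K ^ 2 * (‖x₁ i‖ * ‖x₂ i‖ * ‖x₃ i‖ * ‖x₄ i‖ * ‖x₅ i‖ * ‖x₆ i‖) := by ring

lemma projNorm2_set_nonneg {X Y : Type*} [NormedAddCommGroup X] [NormedSpace ℂ X]
    [NormedAddCommGroup Y] [NormedSpace ℂ Y] (u : X ⊗[ℂ] Y) :
    ∀ r ∈ {r : ℝ | ∃ (m : ℕ) (x : Fin m → X) (y : Fin m → Y),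
      u = ∑ i, x i ⊗ₜ[ℂ] y i ∧ r = ∑ i, ‖x i‖ * ‖y i‖}, 0 ≤ r := by
  rintro r ⟨m, x, y, _, rfl⟩
  exact Finset.sum_nonneg fun i _ => by positivity

set_option maxHeartbeats 2000000 in
/-- The identity `(ℓ²_{d³}) ⊗_π (ℓ²_{d³}) → ⊗⁶_π ℓ²_d` has norm at least `c·d²` for a
universal constant `c > 0`. -/
theorem projective_identity_norm_lower_bound :
    ∃ c : ℝ, 0 < c ∧ ∀ d : ℕ,
      c * (d : ℝ) ^ 2 ≤
        sSup {x : ℝ | ∃ t : E3 d ⊗[ℂ] E3 d, projNorm2 t ≤ 1 ∧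
          x = projNorm6 d (TensorProduct.map (iota d) (iota d) t)} := by
  classical
  refine ⟨1/576, by norm_num, fun d => ?_⟩
  obtain ⟨s, hs1, hs2⟩ := good_sign d
  set s3 : ℝ := (d:ℝ) * Real.sqrt d with hs3
  set A : E3 d := (WithLp.equiv 2 _).symm (fun p => ((s p / s3 : ℝ) : ℂ)) with hA
  set cc : Fin d × Fin d × Fin d → ℂ := fun p => ((s p / s3 : ℝ) : ℂ) with hcc
  have hA_apply : ∀ p, A p = ((s p / s3 : ℝ) : ℂ) := fun p => rfl
  have hAsq : ‖A‖^2 = ∑ p : Fin d × Fin d × Fin d, (s p / s3)^2 := by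
    rw [EuclideanSpace.norm_eq, Real.sq_sqrt (by positivity)]
    refine Finset.sum_congr rfl fun p _ => ?_
    rw [hA_apply p, Complex.norm_real, Real.norm_eq_abs, sq_abs]
  -- the big set is bounded above
  have hBdd : BddAbove {x : ℝ | ∃ t : E3 d ⊗[ℂ] E3 d, projNorm2 t ≤ 1 ∧
      x = projNorm6 d (TensorProduct.map (iota d) (iota d) t)} := by
    refine ⟨2 * (d:ℝ)^3, ?_⟩
    rintro x ⟨t, ht1, rfl⟩
    obtain ⟨S2, hS2rep⟩ := TensorProduct.exists_finset t
    set m₂ := Fintype.card {a // a ∈ S2} with hm₂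
    set e₂ : Fin m₂ ≃ {a // a ∈ S2} := (Fintype.equivFin _).symm with he₂
    set f₀ : Fin m₂ → E3 d := fun i => ((e₂ i : E3 d × E3 d)).1 with hf₀
    set g₀ : Fin m₂ → E3 d := fun i => ((e₂ i : E3 d × E3 d)).2 with hg₀
    have hrep0 : t = ∑ i, f₀ i ⊗ₜ[ℂ] g₀ i := by
      rw [hS2rep]
      rw [← Finset.sum_coe_sort S2 (fun a => a.1 ⊗ₜ[ℂ] a.2)]
      exact (Fintype.sum_equiv (Fintype.equivFin {a // a ∈ S2}).symm _ _ fun i => rfl).symm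
    have hmem2 : (∑ i, ‖f₀ i‖ * ‖g₀ i‖) ∈ {r : ℝ | ∃ (m : ℕ) (x : Fin m → E3 d)
        (y : Fin m → E3 d), t = ∑ i, x i ⊗ₜ[ℂ] y i ∧ r = ∑ i, ‖x i‖ * ‖y i‖} :=
      ⟨m₂, f₀, g₀, hrep0, rfl⟩
    have hlt2 : projNorm2 t < 2 := lt_of_le_of_lt ht1 one_lt_two
    obtain ⟨r2, hr2mem, hr2lt⟩ := exists_lt_of_csInf_lt ⟨_, hmem2⟩ hlt2
    obtain ⟨m, f, g, hrep, hval⟩ := hr2mem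
    rw [hrep]
    refine le_trans (projNorm6_rep_le m f g) ?_
    have hterm : ∀ i, (∑ p, ‖f i p‖) * (∑ q, ‖g i q‖) ≤ (d:ℝ)^3 * (‖f i‖ * ‖g i‖) := by
      intro i
      have h1 := l1_le_sqrt_card d (f i)
      have h2 := l1_le_sqrt_card d (g i)
      have hp1 : (0:ℝ) ≤ ∑ p, ‖f i p‖ := Finset.sum_nonneg fun _ _ => norm_nonneg _
      calc (∑ p, ‖f i p‖) * (∑ q, ‖g i q‖)
          ≤ (Real.sqrt ((d:ℝ)^3) * ‖f i‖) * (Real.sqrt ((d:ℝ)^3) * ‖g i‖) :=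
            mul_le_mul h1 h2 (Finset.sum_nonneg fun _ _ => norm_nonneg _) (by positivity)
        _ = (Real.sqrt ((d:ℝ)^3) * Real.sqrt ((d:ℝ)^3)) * (‖f i‖ * ‖g i‖) := by ring
        _ = (d:ℝ)^3 * (‖f i‖ * ‖g i‖) := by
            rw [Real.mul_self_sqrt (by positivity)]
    calc ∑ i, (∑ p, ‖f i p‖) * (∑ q, ‖g i q‖)
        ≤ ∑ i, (d:ℝ)^3 * (‖f i‖ * ‖g i‖) := Finset.sum_le_sum fun i _ => hterm i
      _ = (d:ℝ)^3 * ∑ i, ‖f i‖ * ‖g i‖ := by rw [Finset.mul_sum]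
      _ = (d:ℝ)^3 * r2 := by rw [hval]
      _ ≤ (d:ℝ)^3 * 2 := by
          apply mul_le_mul_of_nonneg_left (le_of_lt hr2lt) (by positivity)
      _ = 2 * (d:ℝ)^3 := by ring
  -- membership of the witness
  have hAA : (∑ _i : Fin 1, A ⊗ₜ[ℂ] A) = A ⊗ₜ[ℂ] A := Fin.sum_univ_one _
  have hπ2 : projNorm2 (A ⊗ₜ[ℂ] A) ≤ ‖A‖ * ‖A‖ := by
    refine csInf_le ⟨0, fun r hr => projNorm2_set_nonneg _ r hr⟩ ?_
    exact ⟨1, fun _ => A, fun _ => A, by rw [hAA], by rw [Fin.sum_univ_one]⟩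
  have hne6 : {r : ℝ | ∃ (m : ℕ) (x₁ x₂ x₃ x₄ x₅ x₆ : Fin m → V d),
      TensorProduct.map (iota d) (iota d) (A ⊗ₜ[ℂ] A)
        = ∑ i, (x₁ i ⊗ₜ[ℂ] (x₂ i ⊗ₜ[ℂ] x₃ i)) ⊗ₜ[ℂ] (x₄ i ⊗ₜ[ℂ] (x₅ i ⊗ₜ[ℂ] x₆ i)) ∧
      r = ∑ i, ‖x₁ i‖ * ‖x₂ i‖ * ‖x₃ i‖ * ‖x₄ i‖ * ‖x₅ i‖ * ‖x₆ i‖}.Nonempty := by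
    have h := rep6_mem (d := d) 1 (fun _ => A) (fun _ => A)
    rw [hAA] at h
    exact ⟨_, h⟩
  by_cases hd : d = 0
  · -- trivial case
    subst hd
    have hx0 : (0:ℝ) ≤ projNorm6 0 (TensorProduct.map (iota 0) (iota 0) (A ⊗ₜ[ℂ] A)) :=
      Real.sInf_nonneg (projNorm6_set_nonneg 0 _)
    have hmem : projNorm6 0 (TensorProduct.map (iota 0) (iota 0) (A ⊗ₜ[ℂ] A)) ∈
        {x : ℝ | ∃ t : E3 0 ⊗[ℂ] E3 0, projNorm2 t ≤ 1 ∧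
          x = projNorm6 0 (TensorProduct.map (iota 0) (iota 0) t)} := by
      refine ⟨A ⊗ₜ[ℂ] A, ?_, rfl⟩
      refine le_trans hπ2 ?_
      have : ‖A‖ ^ 2 = 0 := by rw [hAsq]; simp
      have h0 : ‖A‖ = 0 := by nlinarith [norm_nonneg A]
      rw [h0]; norm_num
    have := le_csSup hBdd hmem
    simp only [Nat.cast_zero]
    nlinarith [this, hx0]
  -- main case d ≥ 1
  have hd1 : (1:ℝ) ≤ (d:ℝ) := by exact_mod_cast Nat.one_le_iff_ne_zero.2 hd
  have hdpos : (0:ℝ) < d := by linarith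
  have hsd : (0:ℝ) < Real.sqrt d := Real.sqrt_pos.2 hdpos
  have hs3pos : 0 < s3 := by rw [hs3]; positivity
  have hs3sq : s3^2 = (d:ℝ)^3 := by
    rw [hs3, mul_pow, Real.sq_sqrt hdpos.le]; ring
  have hsp2 : ∀ p, s p ^ 2 = 1 := by
    intro p; rw [← sq_abs, hs1 p]; norm_num
  have hsum_real : ∑ p : Fin d × Fin d × Fin d, (s p / s3)^2 = 1 := by
    have : ∀ p : Fin d × Fin d × Fin d, (s p / s3)^2 = 1 / (d:ℝ)^3 := by
      intro p
      rw [div_pow, hsp2 p, hs3sq]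
    rw [Finset.sum_congr rfl fun p _ => this p, Finset.sum_const, nsmul_eq_mul, card_P]
    field_simp
  have hAnorm : ‖A‖ = 1 := by
    have h1 : ‖A‖^2 = 1 := by rw [hAsq, hsum_real]
    nlinarith [norm_nonneg A]
  -- the trilinear bound
  have htriL : ∀ x y z : V d, Complex.abs (triL cc x y z)
      ≤ (24 / (d:ℝ)) * (‖x‖ * ‖y‖ * ‖z‖) := by
    intro x y z
    have heq : triL cc x y z = ((s3⁻¹ : ℝ) : ℂ) * Sfun s x y z := by
      rw [triL_apply, Sfun, Finset.mul_sum]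
      refine Finset.sum_congr rfl fun p _ => ?_
      rw [hcc]
      push_cast
      ring
    rw [heq, map_mul, Complex.abs_ofReal, abs_of_nonneg (by positivity : (0:ℝ) ≤ s3⁻¹)]
    have hb := hs2 x y z
    calc s3⁻¹ * Complex.abs (Sfun s x y z)
        ≤ s3⁻¹ * (24 * Real.sqrt d * (‖x‖ * ‖y‖ * ‖z‖)) :=
          mul_le_mul_of_nonneg_left hb (by positivity)
      _ = (s3⁻¹ * (24 * Real.sqrt d)) * (‖x‖ * ‖y‖ * ‖z‖) := by ring
      _ = (24 / (d:ℝ)) * (‖x‖ * ‖y‖ * ‖z‖) := by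
          congr 1
          rw [hs3]
          field_simp
  -- the pairing value
  have hPhi : Phi cc (TensorProduct.map (iota d) (iota d) (A ⊗ₜ[ℂ] A)) = 1 := by
    rw [TensorProduct.map_tmul, Phi_tmul, F3_iota]
    have hsum : ∑ p : Fin d × Fin d × Fin d, A p * cc p = 1 := by
      have : ∀ p : Fin d × Fin d × Fin d,
          A p * cc p = (((s p / s3)^2 : ℝ) : ℂ) := by
        intro p
        rw [hA_apply p, hcc]
        push_cast
        ring
      rw [Finset.sum_congr rfl fun p _ => this p, ← Complex.ofReal_sum, hsum_real]
      norm_num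
    rw [hsum, mul_one]
  -- the lower bound for projNorm6
  have hlow : (1/576) * (d:ℝ)^2 ≤
      projNorm6 d (TensorProduct.map (iota d) (iota d) (A ⊗ₜ[ℂ] A)) := by
    refine le_csInf hne6 ?_
    intro r hr
    have hK := projNorm6_lower cc (24 / (d:ℝ)) htriL
      (TensorProduct.map (iota d) (iota d) (A ⊗ₜ[ℂ] A)) r hr
    rw [hPhi] at hK
    simp only [map_one] at hK
    have h576 : (24 / (d:ℝ))^2 = 576 / (d:ℝ)^2 := by
      rw [div_pow]; norm_num
    rw [h576] at hK
    -- 1 ≤ 576/d² * r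
    have hd2 : (0:ℝ) < (d:ℝ)^2 := by positivity
    rw [div_mul_eq_mul_div, le_div_iff₀ hd2, one_mul] at hK
    linarith
  have hmem : projNorm6 d (TensorProduct.map (iota d) (iota d) (A ⊗ₜ[ℂ] A)) ∈
      {x : ℝ | ∃ t : E3 d ⊗[ℂ] E3 d, projNorm2 t ≤ 1 ∧
        x = projNorm6 d (TensorProduct.map (iota d) (iota d) t)} := by
    refine ⟨A ⊗ₜ[ℂ] A, ?_, rfl⟩
    refine le_trans hπ2 ?_
    rw [hAnorm]; norm_num
  exact le_trans hlow (le_csSup hBdd hmem)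
end
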